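/- arXiv:1109.1320 — 8 statements merged into one kernel-verified Lean document; each statement's English description precedes it below -/
import Mathlib

section
/- The optimization algorithm is consistent for every continuous objective function f : D → ℝ if and only if for every continuous f : D → ℝ the trajectory {x_K}_{K≥1} generated by the algorithm on f is dense in D. -/
open Filter Topology

/-- A continuous function on a nonempty compact space attains its infimum. -/
lemma exists_min_of_continuous {D : Type*} [MetricSpace D] [CompactSpace D] [Nonempty D]
    (g : D → ℝ) (hg : Continuous g) :
    ∃ x₀ : D, (∀ y, g x₀ ≤ g y) ∧ (⨅ x : D, g x) = g x₀ := by
  obtain ⟨x₀, -, hx₀⟩ := isCompact_univ.exists_isMinOn Set.univ_nonempty hg.continuousOn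
  have hmin : ∀ y, g x₀ ≤ g y := fun y => hx₀ (Set.mem_univ y)
  have hbdd : BddBelow (Set.range g) := ⟨g x₀, by rintro _ ⟨y, rfl⟩; exact hmin y⟩
  refine ⟨x₀, hmin, le_antisymm (ciInf_le hbdd x₀) (le_ciInf hmin)⟩

/-- An optimization algorithm (given by an initial point `x₁` and mappings
`A K : (D × ℝ)^{K+1} → D`, with trajectory defined recursively) is consistent for every
continuous objective function iff for every continuous objective the trajectory is dense. -/
theorem ei_consistency_iff_dense
    {D : Type*} [MetricSpace D] [CompactSpace D] [Nonempty D]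
    (x₁ : D) (A : (K : ℕ) → (Fin (K + 1) → D × ℝ) → D)
    (traj : (D → ℝ) → ℕ → D)
    (htraj0 : ∀ f : D → ℝ, traj f 0 = x₁)
    (htraj : ∀ (f : D → ℝ) (K : ℕ),
      traj f (K + 1) = A K (fun k : Fin (K + 1) => (traj f k, f (traj f k)))) :
    (∀ f : D → ℝ, Continuous f →
        Tendsto (fun K : ℕ => ⨅ k : Fin (K + 1), f (traj f k)) atTop (𝓝 (⨅ x : D, f x)))
      ↔ (∀ f : D → ℝ, Continuous f → DenseRange (traj f)) := by
  constructor
  · -- consistency → density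
    intro hcons f hf
    by_contra hnd
    obtain ⟨x₀, hx₀⟩ : ∃ x₀, x₀ ∉ closure (Set.range (traj f)) := by
      by_contra h
      push_neg at h
      exact hnd h
    obtain ⟨r, hr, hfar⟩ : ∃ r > 0, ∀ n : ℕ, r ≤ dist x₀ (traj f n) := by
      rw [Metric.mem_closure_iff] at hx₀
      push_neg at hx₀
      obtain ⟨r, hr, h⟩ := hx₀
      exact ⟨r, hr, fun n => h _ ⟨n, rfl⟩⟩
    obtain ⟨xm, hxm, hm⟩ := exists_min_of_continuous f hf
    set m : ℝ := ⨅ x : D, f x with hm_def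
    set φ : D → ℝ := fun x => max 0 (1 - dist x x₀ / r) with hφ_def
    have hφ_cont : Continuous φ :=
      continuous_const.max
        (continuous_const.sub ((continuous_id.dist continuous_const).div_const r))
    have hφ_x₀ : φ x₀ = 1 := by simp [hφ_def]
    have hφ_traj : ∀ n : ℕ, φ (traj f n) = 0 := by
      intro n
      have h1 : r ≤ dist (traj f n) x₀ := by rw [dist_comm]; exact hfar n
      have : 1 - dist (traj f n) x₀ / r ≤ 0 := by
        have : 1 ≤ dist (traj f n) x₀ / r := (one_le_div hr).mpr h1
        linarith
      simp only [hφ_def]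
      exact max_eq_left this
    set c : ℝ := f x₀ - m + 1 with hc_def
    set g : D → ℝ := fun x => f x - c * φ x with hg_def
    have hg_cont : Continuous g := hf.sub (continuous_const.mul hφ_cont)
    have hg_traj : ∀ n : ℕ, g (traj f n) = f (traj f n) := by
      intro n; simp [hg_def, hφ_traj n]
    have htraj_eq : ∀ n : ℕ, traj g n = traj f n := by
      intro n
      induction n using Nat.strong_induction_on with
      | _ n ih =>
        match n with
        | 0 => rw [htraj0 g, htraj0 f]
        | K + 1 =>
          rw [htraj g K, htraj f K]
          congr 1
          funext k
          have hk : traj g (k : ℕ) = traj f (k : ℕ) := ih _ (by omega)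
          rw [hk, hg_traj]
    have hten := hcons g hg_cont
    have hge : m ≤ ⨅ x : D, g x := by
      refine ge_of_tendsto' hten ?_
      intro K
      refine le_ciInf fun k => ?_
      rw [htraj_eq, hg_traj, hm]
      exact hxm _
    obtain ⟨xg, hxg, -⟩ := exists_min_of_continuous g hg_cont
    have hbddg : BddBelow (Set.range g) := ⟨g xg, by rintro _ ⟨y, rfl⟩; exact hxg y⟩
    have hle : (⨅ x : D, g x) ≤ g x₀ := ciInf_le hbddg x₀
    have : g x₀ = m - 1 := by simp [hg_def, hφ_x₀, hc_def]; ring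
    linarith
  · -- density → consistency
    intro hdense f hf
    obtain ⟨xm, hxm, hm⟩ := exists_min_of_continuous f hf
    set m : ℝ := ⨅ x : D, f x with hm_def
    have hbdd : ∀ K : ℕ, BddBelow (Set.range fun k : Fin (K + 1) => f (traj f k)) :=
      fun K => Set.Finite.bddBelow (Set.finite_range _)
    have hlow : ∀ K : ℕ, m ≤ ⨅ k : Fin (K + 1), f (traj f k) := by
      intro K
      refine le_ciInf fun k => hm ▸ hxm _
    rw [Metric.tendsto_atTop]
    intro ε hε
    -- find a trajectory point with value < m + ε
    have hcontat : ContinuousAt f xm := hf.continuousAt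
    rw [Metric.continuousAt_iff] at hcontat
    obtain ⟨δ, hδ, hδ'⟩ := hcontat ε hε
    have hxm_cl : xm ∈ closure (Set.range (traj f)) := hdense f hf xm
    rw [Metric.mem_closure_iff] at hxm_cl
    obtain ⟨_, ⟨n, rfl⟩, hn⟩ := hxm_cl δ hδ
    have hfn : f (traj f n) < m + ε := by
      have := hδ' (x := traj f n) (by rw [dist_comm]; exact hn)
      rw [Real.dist_eq, abs_lt] at this
      rw [hm]
      linarith [this.1, this.2]
    refine ⟨n, fun K hK => ?_⟩
    have hub : (⨅ k : Fin (K + 1), f (traj f k)) ≤ f (traj f n) :=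
      ciInf_le (hbdd K) ⟨n, by omega⟩
    have hlb := hlow K
    rw [Real.dist_eq, abs_lt]
    constructor <;> [linarith; linarith]
end

section
/- Assume there exist constants c₀, c > 0 such that Ĝ(t) ≤ c₀ e^{−c|t|} for all t ∈ ℝ. Then for every infinite subset A of the segment [−1,1] and every x ∈ [−1,1], the function φ_x belongs to the closed linear span of the family {φ_y : y ∈ A} in L²(ℝ, Ĝ(t)dt). (Via the canonical isometry ξ_x ↦ φ_x, this says that every random variable ξ_x of the centered stationary Gaussian process with spectral density Ĝ belongs to the closed linear span of (ξ_y)_{y∈A} in L²(Ω,P).) -/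
/-!
If `v ∈ L²(Ĝ dt)` is orthogonal to every `φ_y`, `y ∈ A`, consider
`F(z) = ∫ e^{-izt} v(t) Ĝ(t) dt`, so that `F(y) = ⟪φ_y, v⟫` for real `y`. The decay of `Ĝ` puts
`e^{c|t|/4}` in `L²(Ĝ dt)`, so by Cauchy–Schwarz the integrand is dominated uniformly on compact
subsets of the strip `|Im z| < c/4` and `F` is holomorphic there. `F` vanishes on `A`, which
accumulates in `[-1, 1]`, hence `F ≡ 0` on the strip and `v ⊥ φ_x`. Thus `φ_x` lies in
`(span φ(A))^⊥⊥`, the closure of the span.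
-/

open MeasureTheory Complex

theorem integrable_exp_neg_mul_abs {d : ℝ} (hd : 0 < d) :
    Integrable (fun t : ℝ => Real.exp (-d * |t|)) := by
  have hIci : IntegrableOn (fun t : ℝ => Real.exp (-d * t)) (Set.Ici 0) := by
    rw [integrableOn_Ici_iff_integrableOn_Ioi]
    exact exp_neg_integrableOn_Ioi 0 hd
  set g := (Set.Ici (0 : ℝ)).indicator fun t => Real.exp (-d * t)
  have hg : Integrable g := (integrable_indicator_iff measurableSet_Ici).2 hIci
  refine (hg.add hg.comp_neg).mono' (by fun_prop) (ae_of_all _ fun t => ?_)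
  have hg0 : ∀ s, 0 ≤ g s := Set.indicator_nonneg fun _ _ => Real.exp_nonneg _
  rw [Real.norm_of_nonneg (Real.exp_nonneg _), Pi.add_apply]
  rcases le_total 0 t with ht | ht
  · have : g t = Real.exp (-d * |t|) := by simp [g, ht, abs_of_nonneg ht]
    linarith [hg0 (-t)]
  · have : g (-t) = Real.exp (-d * |t|) := by simp [g, ht, abs_of_nonpos ht]
    linarith [hg0 t]

theorem memLp_two_exp_mul_abs_withDensity {g : ℝ → ℝ} (hg : Measurable g) (hg0 : ∀ t, 0 ≤ g t)
    {c₀ c b : ℝ} (hdecay : ∀ t, g t ≤ c₀ * Real.exp (-c * |t|)) (hb : 2 * b < c) :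
    MemLp (fun t => Real.exp (b * |t|)) 2 (volume.withDensity fun t => ENNReal.ofReal (g t)) := by
  rw [memLp_two_iff_integrable_sq (by fun_prop), integrable_withDensity_iff hg.ennreal_ofReal
    (ae_of_all _ fun _ => ENNReal.ofReal_lt_top)]
  refine ((integrable_exp_neg_mul_abs (d := c - 2 * b) (by linarith)).const_mul c₀).mono'
    (by fun_prop) (ae_of_all _ fun t => ?_)
  rw [ENNReal.toReal_ofReal (hg0 t), ← Real.exp_nat_mul,
    Real.norm_of_nonneg (mul_nonneg (Real.exp_nonneg _) (hg0 t))]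
  calc Real.exp (↑2 * (b * |t|)) * g t ≤ Real.exp (↑2 * (b * |t|)) * (c₀ * Real.exp (-c * |t|)) :=
        mul_le_mul_of_nonneg_left (hdecay t) (Real.exp_nonneg _)
    _ = c₀ * Real.exp (-(c - 2 * b) * |t|) := by
        rw [mul_left_comm, ← Real.exp_add]; ring_nf

theorem mem_closure_span_of_forall_inner_eq_zero {𝕜 E : Type*} [RCLike 𝕜] [NormedAddCommGroup E]
    [InnerProductSpace 𝕜 E] [CompleteSpace E] {s : Set E} {x : E}
    (h : ∀ v, (∀ y ∈ s, inner 𝕜 y v = 0) → inner 𝕜 x v = 0) :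
    x ∈ closure (Submodule.span 𝕜 s : Set E) := by
  rw [← Submodule.topologicalClosure_coe, ← Submodule.orthogonal_orthogonal_eq_closure,
    SetLike.mem_coe, Submodule.mem_orthogonal]
  intro v hv
  rw [← inner_conj_symm, h v fun y hy => hv y (Submodule.subset_span hy), map_zero]

theorem AnalyticOnNhd.eq_zero_of_infinite_bounded_real_zeros {E : Type*} [NormedAddCommGroup E]
    [NormedSpace ℂ E] {f : ℂ → E} {b : ℝ} (hb : 0 < b) (hf : AnalyticOnNhd ℂ f {z | |z.im| < b})
    {A : Set ℝ} (hbdd : Bornology.IsBounded A) (hinf : A.Infinite) (hzero : ∀ y ∈ A, f y = 0)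
    (x : ℝ) : f x = 0 := by
  have hreal : ∀ y : ℝ, (y : ℂ) ∈ {z : ℂ | |z.im| < b} := by simpa using hb
  have hconv : Convex ℝ {z : ℂ | |z.im| < b} := by
    simpa [Set.preimage, abs_lt] using (convex_Ioo (-b) b).linear_preimage Complex.imLm
  obtain ⟨x₀, -, hacc⟩ := hinf.exists_accPt_of_subset_isCompact hbdd.isCompact_closure
    subset_closure
  have hfreq : ∃ᶠ z in nhdsWithin (x₀ : ℂ) {(x₀ : ℂ)}ᶜ, f z = 0 := by
    rw [frequently_nhdsWithin_iff]
    refine (continuous_ofReal.tendsto x₀).frequently ((accPt_iff_frequently.1 hacc).mono ?_)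
    rintro y ⟨hne, hy⟩
    exact ⟨hzero y hy, by simpa using hne⟩
  exact hf.eqOn_zero_of_preconnected_of_frequently_eq_zero hconv.isPreconnected (hreal x₀) hfreq
    (hreal x)

noncomputable def fourierLaplace (μ : Measure ℝ) (V : ℝ → ℂ) (z : ℂ) : ℂ :=
  ∫ t, cexp (-I * z * t) * V t ∂μ

theorem norm_cexp_neg_I_mul_mul (z : ℂ) (t : ℝ) : ‖cexp (-I * z * t)‖ = Real.exp (z.im * t) := by
  rw [norm_exp]
  simp

theorem norm_cexp_neg_I_mul_mul_le {z : ℂ} {b : ℝ} (hz : |z.im| ≤ b) (t : ℝ) :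
    ‖cexp (-I * z * t)‖ ≤ Real.exp (b * |t|) := by
  rw [norm_cexp_neg_I_mul_mul, Real.exp_le_exp]
  calc z.im * t ≤ |z.im| * |t| := by rw [← abs_mul]; exact le_abs_self _
    _ ≤ b * |t| := by gcongr

theorem abs_le_inv_mul_exp {δ : ℝ} (hδ : 0 < δ) (t : ℝ) : |t| ≤ δ⁻¹ * Real.exp (δ * |t|) := by
  rw [le_inv_mul_iff₀ hδ]
  linarith [Real.add_one_le_exp (δ * |t|)]

theorem differentiableOn_fourierLaplace {μ : Measure ℝ} {V : ℝ → ℂ}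
    (hV : AEStronglyMeasurable V μ) {b : ℝ}
    (hint : Integrable (fun t => Real.exp (b * |t|) * ‖V t‖) μ) :
    DifferentiableOn ℂ (fourierLaplace μ V) {z | |z.im| < b} := by
  intro z₀ (hz₀ : |z₀.im| < b)
  set δ := (b - |z₀.im|) / 2 with hδ_def
  have hδ : 0 < δ := by linarith
  have hball : ∀ z ∈ Metric.ball z₀ δ, |z.im| ≤ b - δ := by
    intro z hz
    have h₁ : |z.im - z₀.im| < δ := (abs_im_le_norm (z - z₀)).trans_lt (mem_ball_iff_norm.1 hz)
    have h₂ : |z.im| - |z₀.im| ≤ |z.im - z₀.im| := abs_sub_abs_le_abs_sub _ _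
    linarith
  have hmeas : ∀ z : ℂ, AEStronglyMeasurable (fun t : ℝ => cexp (-I * z * t) * V t) μ :=
    fun z => (by fun_prop : Continuous fun t : ℝ => cexp (-I * z * t)).aestronglyMeasurable.mul hV
  refine (hasDerivAt_integral_of_dominated_loc_of_deriv_le
    (F' := fun z t => cexp (-I * z * t) * (-I * t) * V t)
    (Metric.ball_mem_nhds z₀ hδ) (.of_forall hmeas) ?_ ?_ ?_
    (hint.const_mul δ⁻¹) ?_).2.differentiableAt.differentiableWithinAt
  · refine hint.mono' (hmeas z₀) (ae_of_all _ fun t => ?_)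
    rw [norm_mul]
    gcongr
    exact norm_cexp_neg_I_mul_mul_le hz₀.le t
  · exact (by fun_prop : Continuous fun t : ℝ => cexp (-I * z₀ * t) * (-I * t))
      |>.aestronglyMeasurable.mul hV
  · refine ae_of_all _ fun t z hz => ?_
    have hnorm : ‖-I * (t : ℂ)‖ = |t| := by simp
    rw [norm_mul, norm_mul, hnorm]
    -- the margin `δ` between `z` and the edge of the strip absorbs the factor `t` of the derivative
    calc ‖cexp (-I * z * t)‖ * |t| * ‖V t‖
        ≤ Real.exp ((b - δ) * |t|) * (δ⁻¹ * Real.exp (δ * |t|)) * ‖V t‖ := by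
          gcongr
          · exact norm_cexp_neg_I_mul_mul_le (hball z hz) t
          · exact abs_le_inv_mul_exp hδ t
      _ = δ⁻¹ * (Real.exp (b * |t|) * ‖V t‖) := by
          rw [mul_left_comm, ← Real.exp_add]; ring_nf
  · refine ae_of_all _ fun t z _ => ?_
    simpa using (((hasDerivAt_id z).const_mul (-I)).mul_const (t : ℂ)).cexp.mul_const (V t)

theorem inner_eq_fourierLaplace {μ : Measure ℝ} {f : Lp ℂ 2 μ} {x : ℝ}
    (hf : (f : ℝ → ℂ) =ᵐ[μ] fun t => cexp (I * x * t)) (v : Lp ℂ 2 μ) :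
    inner ℂ f v = fourierLaplace μ v x := by
  rw [L2.inner_def]
  refine integral_congr_ae ?_
  filter_upwards [hf] with t ht
  rw [RCLike.inner_apply', ht, ← exp_conj]
  simp

theorem exp_mem_closed_span_of_infinite_general
    (Ghat : ℝ → ℝ) (hcont : Continuous Ghat)
    (hpos : ∀ t, 0 < Ghat t)
    (c₀ c : ℝ) (hc : 0 < c)
    (hdecay : ∀ t : ℝ, Ghat t ≤ c₀ * Real.exp (-c * |t|))
    (μ : Measure ℝ) (hμ : μ = volume.withDensity (fun t => ENNReal.ofReal (Ghat t)))
    (φ : ℝ → Lp ℂ 2 μ)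
    (hφ : ∀ x : ℝ, (φ x : ℝ → ℂ) =ᵐ[μ]
      fun t => Complex.exp (Complex.I * (x : ℂ) * (t : ℂ)))
    (A : Set ℝ) (hA : A ⊆ Set.Icc (-1 : ℝ) 1) (hAinf : A.Infinite) :
    ∀ x ∈ Set.Icc (-1 : ℝ) 1,
      φ x ∈ closure ((Submodule.span ℂ (φ '' A) : Submodule ℂ (Lp ℂ 2 μ)) : Set (Lp ℂ 2 μ)) := by
  intro x _
  refine mem_closure_span_of_forall_inner_eq_zero fun v hv => ?_
  have hweight : MemLp (fun t => Real.exp (c / 4 * |t|)) 2 μ :=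
    hμ ▸ memLp_two_exp_mul_abs_withDensity hcont.measurable (fun t => (hpos t).le) hdecay
      (by linarith)
  have hanalytic : AnalyticOnNhd ℂ (fourierLaplace μ v) {z | |z.im| < c / 4} :=
    (differentiableOn_fourierLaplace (Lp.aestronglyMeasurable v)
      (hweight.integrable_mul (Lp.memLp v).norm)).analyticOnNhd
      (isOpen_lt (continuous_abs.comp continuous_im) continuous_const)
  rw [inner_eq_fourierLaplace (hφ x)]
  refine hanalytic.eq_zero_of_infinite_bounded_real_zeros (by positivity)
    ((Metric.isBounded_Icc (-1 : ℝ) 1).subset hA) hAinf (fun y hy => ?_) x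
  rw [← inner_eq_fourierLaplace (hφ y)]
  exact hv _ ⟨y, hy, rfl⟩

/-- If the spectral density `Ĝ` satisfies `Ĝ(t) ≤ c₀ e^{-c|t|}`, then for every
infinite subset `A ⊆ [-1,1]` and every `x ∈ [-1,1]`, the exponential `φ_x(t) = e^{ixt}` lies in
the closed linear span of `{φ_y : y ∈ A}` in `L²(ℝ, Ĝ(t)dt)`. -/
theorem exp_mem_closed_span_of_infinite
    (Ghat : ℝ → ℝ) (hcont : Continuous Ghat) (heven : ∀ t, Ghat (-t) = Ghat t)
    (hpos : ∀ t, 0 < Ghat t) (hint : Integrable Ghat)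
    (c₀ c : ℝ) (hc₀ : 0 < c₀) (hc : 0 < c)
    (hdecay : ∀ t : ℝ, Ghat t ≤ c₀ * Real.exp (-c * |t|))
    (μ : Measure ℝ) (hμ : μ = volume.withDensity (fun t => ENNReal.ofReal (Ghat t)))
    (φ : ℝ → Lp ℂ 2 μ)
    (hφ : ∀ x : ℝ, (φ x : ℝ → ℂ) =ᵐ[μ]
      fun t => Complex.exp (Complex.I * (x : ℂ) * (t : ℂ)))
    (A : Set ℝ) (hA : A ⊆ Set.Icc (-1 : ℝ) 1) (hAinf : A.Infinite) :
    ∀ x ∈ Set.Icc (-1 : ℝ) 1,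
      φ x ∈ closure ((Submodule.span ℂ (φ '' A) : Submodule ℂ (Lp ℂ 2 μ)) : Set (Lp ℂ 2 μ)) :=
  exp_mem_closed_span_of_infinite_general Ghat hcont hpos c₀ c hc hdecay μ hμ φ hφ A hA hAinf
end

section
/- Let x, x₁, …, x_K ∈ [−1,1] be pairwise distinct and let λ_{K,k} = ∏_{l≠k} (x − x_l)/(x_k − x_l) be the Lagrange interpolation coefficients. Then ‖φ_x − Σ_{k=1}^K λ_{K,k} φ_{x_k}‖²_{L²(ℝ,Ĝ)} ≤ (1/(K!)²) · ∏_{k=1}^K |x − x_k|² · ∫_ℝ t^{2K} Ĝ(t) dt. Moreover, if Ĝ(t) ≤ c₀ e^{−c|t|} for all t with constants c₀, c > 0, and |x − x_k| < c/4 for all k, then ‖φ_x − Σ_{k=1}^K λ_{K,k} φ_{x_k}‖²_{L²(ℝ,Ĝ)} ≤ 2 c₀ (2K)! / (c · 4^{2K} (K!)²). -/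
/-!
For a fixed frequency `t`, the function `y ↦ exp (i y t)` has `K`-th derivative of modulus
`|t| ^ K`, so the classical remainder estimate for Lagrange interpolation bounds the pointwise
error at `x` by `|t| ^ K ∏ |x - x_k| / K!`. That estimate comes from applying Rolle's theorem `K`
times to `W f - (W p + E ω)`, where `p` is the interpolant, `ω` the nodal polynomial, `W = ω x`
and `E = f x - p x`: it vanishes at `x` and at the `K` nodes, while its `K`-th derivative is
`W f⁽ᴷ⁾ - K! E`. Rolle fails for complex values, so for a vector-valued `f` one applies this to
`ℓ ∘ f` for a norming functional `ℓ`.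
Squaring and integrating against `Ĝ` gives the first bound. Under exponential decay the Gamma
integral gives `∫ t ^ (2K) Ĝ ≤ 2 c₀ (2K)! / c ^ (2K + 1)`, and `|x - x_k| < c / 4` gives the second.
-/

open MeasureTheory Polynomial Finset Set

section

open scoped Nat

theorem exists_iteratedDeriv_eq_zero_of_strictMono {n : ℕ} {g : ℝ → ℝ} (hg : ContDiff ℝ n g)
    {p : Fin (n + 1) → ℝ} (hp : StrictMono p) (hz : ∀ i, g (p i) = 0) :
    ∃ ξ, iteratedDeriv n g ξ = 0 := by
  induction n generalizing g with
  | zero => exact ⟨p 0, by simpa using hz 0⟩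
  | succ n ih =>
    rw [Nat.cast_succ] at hg
    obtain ⟨hgd, -, hg'⟩ := contDiff_succ_iff_deriv.mp hg
    have hrolle (i : Fin (n + 1)) : ∃ c ∈ Ioo (p i.castSucc) (p i.succ), deriv g c = 0 :=
      exists_deriv_eq_zero (hp Fin.castSucc_lt_succ) hgd.continuous.continuousOn (by rw [hz, hz])
    choose q hq hq0 using hrolle
    have hqmono : StrictMono q := fun i j hij =>
      calc q i < p i.succ := (hq i).2
        _ ≤ p j.castSucc := hp.monotone (Fin.succ_le_castSucc_iff.mpr hij)
        _ < q j := (hq j).1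
    simpa only [iteratedDeriv_succ'] using ih hg' hqmono hq0

theorem exists_iteratedDeriv_eq_zero_of_card {n : ℕ} {g : ℝ → ℝ} (hg : ContDiff ℝ n g)
    {s : Finset ℝ} (hs : #s = n + 1) (hz : ∀ y ∈ s, g y = 0) : ∃ ξ, iteratedDeriv n g ξ = 0 :=
  exists_iteratedDeriv_eq_zero_of_strictMono hg (s.orderEmbOfFin hs).strictMono
    fun i => hz _ (s.orderEmbOfFin_mem hs i)

theorem Polynomial.Monic.iterate_derivative_natDegree {R : Type*} [Semiring R] {p : R[X]}
    (hp : p.Monic) : derivative^[p.natDegree] p = C (p.natDegree ! : R) := by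
  ext m
  rw [coeff_iterate_derivative, coeff_C]
  rcases m.eq_zero_or_pos with rfl | hm
  · simp [hp.coeff_natDegree, Nat.descFactorial_self]
  · rw [coeff_eq_zero_of_natDegree_lt (by omega), if_neg hm.ne']
    simp

theorem Polynomial.iteratedDeriv_eval {𝕜 : Type*} [NontriviallyNormedField 𝕜] (p : 𝕜[X])
    (n : ℕ) : iteratedDeriv n (fun x => p.eval x) = fun x => (derivative^[n] p).eval x := by
  induction n generalizing p with
  | zero => rfl
  | succ n ih =>
    rw [iteratedDeriv_succ', Function.iterate_succ_apply, ← ih]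
    congr 1
    funext x
    exact p.deriv

theorem Lagrange.eval_basis {F ι : Type*} [Field F] [DecidableEq ι] (s : Finset ι) (v : ι → F)
    (i : ι) (x : F) :
    (Lagrange.basis s v i).eval x = ∏ j ∈ s.erase i, (x - v j) / (v i - v j) := by
  simp [Lagrange.basis, Lagrange.basisDivisor, eval_prod, div_eq_inv_mul]

open Lagrange in
theorem exists_sub_eval_interpolate_mul_factorial_eq {ι : Type*} [DecidableEq ι] {s : Finset ι}
    {v : ι → ℝ} (hvs : Set.InjOn v s) {f : ℝ → ℝ} (hf : ContDiff ℝ #s f) {x : ℝ}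
    (hx : ∀ i ∈ s, v i ≠ x) :
    ∃ ξ, (f x - (interpolate s v (f ∘ v)).eval x) * (#s)! =
      (nodal s v).eval x * iteratedDeriv #s f ξ := by
  set n := #s
  set p := interpolate s v (f ∘ v)
  set W := (nodal s v).eval x
  set E := f x - p.eval x
  set q := C W * p + C E * nodal s v
  set g : ℝ → ℝ := fun y => W * f y - q.eval y
  have hzero : ∀ y ∈ insert x (s.image v), g y = 0 := by
    simp only [Finset.mem_insert, Finset.mem_image]
    rintro y (rfl | ⟨i, hi, rfl⟩)
    · simp only [g, q, E, eval_add, eval_mul, eval_C]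
      ring
    · simp only [g, q, p, eval_add, eval_mul, eval_C, eval_nodal_at_node hi,
        eval_interpolate_at_node _ hvs hi, Function.comp_apply]
      ring
  have hcard : #(insert x (s.image v)) = n + 1 := by
    rw [card_insert_of_notMem (by simpa using hx), card_image_of_injOn hvs]
  have hWf : ContDiff ℝ n fun y => W * f y := contDiff_const.mul hf
  have hq_smooth : ContDiff ℝ n fun y => q.eval y := q.contDiff_aeval n
  obtain ⟨ξ, hξ⟩ := exists_iteratedDeriv_eq_zero_of_card (hWf.sub hq_smooth) hcard hzero
  have hq : derivative^[n] q = C (E * n !) := by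
    have hp : derivative^[n] p = 0 :=
      iterate_derivative_eq_zero_of_degree_lt (degree_interpolate_lt _ hvs)
    have hnodal : derivative^[n] (nodal s v) = C (n ! : ℝ) := by
      simpa only [natDegree_nodal] using
        (nodal_monic (s := s) (v := v)).iterate_derivative_natDegree
    rw [iterate_map_add, iterate_derivative_C_mul, iterate_derivative_C_mul, hp, hnodal, mul_zero,
      zero_add, C_mul]
  have hgn : iteratedDeriv n g ξ = W * iteratedDeriv n f ξ - E * n ! := by
    rw [iteratedDeriv_fun_sub hWf.contDiffAt hq_smooth.contDiffAt,
      iteratedDeriv_const_mul_field, q.iteratedDeriv_eval]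
    simp only [hq, eval_C]
  exact ⟨ξ, by linarith⟩

theorem abs_sub_eval_interpolate_le {ι : Type*} [DecidableEq ι] {s : Finset ι} {v : ι → ℝ}
    (hvs : Set.InjOn v s) {f : ℝ → ℝ} (hf : ContDiff ℝ #s f) {M : ℝ}
    (hM : ∀ y, |iteratedDeriv #s f y| ≤ M) (x : ℝ) :
    |f x - (Lagrange.interpolate s v (f ∘ v)).eval x| ≤ M / (#s)! * ∏ i ∈ s, |x - v i| := by
  by_cases hx : ∃ i ∈ s, v i = x
  · obtain ⟨i, hi, rfl⟩ := hx
    rw [Lagrange.eval_interpolate_at_node _ hvs hi, Function.comp_apply, sub_self, abs_zero]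
    have := (abs_nonneg _).trans (hM 0)
    positivity
  obtain ⟨ξ, hξ⟩ := exists_sub_eval_interpolate_mul_factorial_eq hvs hf (by simpa using hx)
  have hfac : (0 : ℝ) < (#s)! := Nat.cast_pos.mpr (Nat.factorial_pos _)
  rw [div_mul_eq_mul_div, le_div_iff₀ hfac]
  calc |f x - (Lagrange.interpolate s v (f ∘ v)).eval x| * (#s)!
      = |(Lagrange.nodal s v).eval x| * |iteratedDeriv #s f ξ| := by
        rw [← abs_of_pos hfac, ← abs_mul, hξ, abs_mul]
    _ ≤ |(Lagrange.nodal s v).eval x| * M := by gcongr; exact hM ξ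
    _ = M * ∏ i ∈ s, |x - v i| := by rw [Lagrange.eval_nodal, abs_prod, mul_comm]

theorem ContinuousLinearMap.iteratedDeriv_comp_left {𝕜 E F : Type*} [NontriviallyNormedField 𝕜]
    [NormedAddCommGroup E] [NormedSpace 𝕜 E] [NormedAddCommGroup F] [NormedSpace 𝕜 F]
    (ℓ : E →L[𝕜] F) {f : 𝕜 → E} {n : ℕ} (hf : ContDiff 𝕜 n f) (y : 𝕜) :
    iteratedDeriv n (ℓ ∘ f) y = ℓ (iteratedDeriv n f y) := by
  simp only [iteratedDeriv_eq_iteratedFDeriv, ℓ.iteratedFDeriv_comp_left hf.contDiffAt le_rfl]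
  rfl

open Lagrange in
theorem norm_sub_sum_eval_basis_smul_le {E : Type*} [NormedAddCommGroup E] [NormedSpace ℝ E]
    {ι : Type*} [DecidableEq ι] {s : Finset ι} {v : ι → ℝ} (hvs : Set.InjOn v s) {f : ℝ → E}
    (hf : ContDiff ℝ #s f) {M : ℝ} (hM : ∀ y, ‖iteratedDeriv #s f y‖ ≤ M) (x : ℝ) :
    ‖f x - ∑ i ∈ s, (Lagrange.basis s v i).eval x • f (v i)‖
      ≤ M / (#s)! * ∏ i ∈ s, |x - v i| := by
  obtain ⟨ℓ, hℓ, hℓx⟩ :=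
    exists_dual_vector'' ℝ (f x - ∑ i ∈ s, (Lagrange.basis s v i).eval x • f (v i))
  have hℓM (y : ℝ) : |iteratedDeriv #s (ℓ ∘ f) y| ≤ M := by
    rw [ℓ.iteratedDeriv_comp_left hf, ← Real.norm_eq_abs]
    calc ‖ℓ (iteratedDeriv #s f y)‖ ≤ ‖ℓ‖ * ‖iteratedDeriv #s f y‖ := ℓ.le_opNorm _
      _ ≤ 1 * M := mul_le_mul hℓ (hM y) (norm_nonneg _) zero_le_one
      _ = M := one_mul M
  have hℓinterp : ℓ (f x - ∑ i ∈ s, (Lagrange.basis s v i).eval x • f (v i))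
      = (ℓ ∘ f) x - (interpolate s v (ℓ ∘ f ∘ v)).eval x := by
    simp [interpolate_apply, eval_finsetSum, mul_comm]
  calc _ = ℓ (f x - ∑ i ∈ s, (Lagrange.basis s v i).eval x • f (v i)) := hℓx.symm
    _ ≤ |(ℓ ∘ f) x - (interpolate s v (ℓ ∘ f ∘ v)).eval x| := hℓinterp ▸ le_abs_self _
    _ ≤ M / (#s)! * ∏ i ∈ s, |x - v i| :=
      abs_sub_eval_interpolate_le hvs (ℓ.contDiff.comp hf) hℓM x

theorem iteratedDeriv_cexp_real_const_mul (n : ℕ) (c : ℂ) :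
    iteratedDeriv n (fun y : ℝ => Complex.exp (c * y)) =
      fun y : ℝ => c ^ n * Complex.exp (c * y) := by
  induction n with
  | zero => simp
  | succ n ih =>
    rw [iteratedDeriv_succ, ih]
    funext y
    rw [(((hasDerivAt_id' (y : ℂ)).const_mul c).cexp.const_mul (c ^ n)).comp_ofReal.deriv]
    ring

open Complex in
theorem sq_norm_cexp_sub_sum_eval_basis_mul_le {ι : Type*} [DecidableEq ι] {s : Finset ι}
    {v : ι → ℝ} (hvs : Set.InjOn v s) (x t : ℝ) :
    ‖exp (I * x * t) - ∑ i ∈ s, (((Lagrange.basis s v i).eval x : ℝ) : ℂ) * exp (I * v i * t)‖ ^ 2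
      ≤ 1 / ((#s)! : ℝ) ^ 2 * (∏ i ∈ s, |x - v i| ^ 2) * t ^ (2 * #s) := by
  have hsmooth : ContDiff ℝ #s fun y : ℝ => exp (I * t * y) :=
    contDiff_exp.comp (contDiff_const.mul ofRealCLM.contDiff)
  have hbound (y : ℝ) : ‖iteratedDeriv #s (fun y : ℝ => exp (I * t * y)) y‖ ≤ |t| ^ #s := by
    simp [iteratedDeriv_cexp_real_const_mul, norm_exp]
  have hcomm (y : ℝ) : I * y * t = I * t * y := by ring
  calc _ ≤ (|t| ^ #s / (#s)! * ∏ i ∈ s, |x - v i|) ^ 2 := by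
        simp only [hcomm, ← real_smul]
        gcongr
        exact norm_sub_sum_eval_basis_smul_le hvs hsmooth hbound x
    _ = 1 / ((#s)! : ℝ) ^ 2 * (∏ i ∈ s, |x - v i| ^ 2) * t ^ (2 * #s) := by
        rw [mul_pow, div_pow, ← pow_mul, mul_comm #s 2, pow_mul, sq_abs, ← Finset.prod_pow]
        ring

theorem MeasureTheory.L2.sq_norm_le_integral_of_ae_le {α 𝕜 E : Type*} [MeasurableSpace α]
    {μ : Measure α} [RCLike 𝕜] [NormedAddCommGroup E] [InnerProductSpace 𝕜 E] (f : α →₂[μ] E)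
    {B : α → ℝ} (hB : Integrable B μ) (hfB : ∀ᵐ a ∂μ, ‖f a‖ ^ 2 ≤ B a) :
    ‖f‖ ^ 2 ≤ ∫ a, B a ∂μ := by
  have hnorm : ‖f‖ ^ 2 = ∫ a, ‖f a‖ ^ 2 ∂μ := by
    rw [← inner_self_eq_norm_sq (𝕜 := 𝕜), L2.inner_def, ← integral_re (L2.integrable_inner f f)]
    simp only [inner_self_eq_norm_sq]
  rw [hnorm]
  exact integral_mono_of_nonneg (.of_forall fun a => by positivity) hB hfB

theorem integral_withDensity_ofReal {α : Type*} [MeasurableSpace α] {μ : Measure α}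
    {G : α → ℝ} (hG : AEMeasurable G μ) (hG0 : ∀ a, 0 ≤ G a) (g : α → ℝ) :
    ∫ a, g a ∂μ.withDensity (fun a => ENNReal.ofReal (G a)) = ∫ a, G a * g a ∂μ := by
  rw [integral_withDensity_eq_integral_toReal_smul₀ hG.ennreal_ofReal
    (.of_forall fun _ => ENNReal.ofReal_lt_top)]
  simp [ENNReal.toReal_ofReal (hG0 _)]

theorem integrable_withDensity_ofReal_iff {α : Type*} [MeasurableSpace α] {μ : Measure α}
    {G : α → ℝ} (hG : AEMeasurable G μ) (hG0 : ∀ a, 0 ≤ G a) {g : α → ℝ} :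
    Integrable g (μ.withDensity (fun a => ENNReal.ofReal (G a))) ↔
      Integrable (fun a => G a * g a) μ := by
  rw [integrable_withDensity_iff_integrable_smul₀' hG.ennreal_ofReal
    (.of_forall fun _ => ENNReal.ofReal_lt_top)]
  simp [ENNReal.toReal_ofReal (hG0 _)]

theorem MeasureTheory.Lp.coeFn_sub_sum_smul_ae_eq {α β ι 𝕜 E : Type*} [MeasurableSpace α]
    {μ : Measure α} [NormedField 𝕜] [NormedAddCommGroup E] [NormedSpace 𝕜 E] {p : ENNReal}
    [Fact (1 ≤ p)]
    {u : β → Lp E p μ} {e : β → α → E} (hu : ∀ b, u b =ᵐ[μ] e b) (b : β) (s : Finset ι)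
    (c : ι → 𝕜) (w : ι → β) :
    ⇑(u b - ∑ i ∈ s, c i • u (w i)) =ᵐ[μ] fun a => e b a - ∑ i ∈ s, c i • e (w i) a := by
  filter_upwards [Lp.coeFn_sub (u b) (∑ i ∈ s, c i • u (w i)),
    Lp.coeFn_fun_finsetSum s fun i => c i • u (w i), hu b,
    (Filter.eventually_all_finset s).mpr fun i _ => Lp.coeFn_smul (c i) (u (w i)),
    (Filter.eventually_all_finset s).mpr fun i _ => hu (w i)] with a hsub hsum hb hsmul hw
  rw [hsub, Pi.sub_apply, hsum, hb]
  exact congrArg _ (Finset.sum_congr rfl fun i hi => by rw [hsmul i hi, Pi.smul_apply, hw i hi])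

theorem integral_pow_mul_exp_neg_mul_Ioi (n : ℕ) {c : ℝ} (hc : 0 < c) :
    ∫ u in Ioi 0, u ^ n * Real.exp (-(c * u)) = n ! / c ^ (n + 1) := by
  have h := Real.integral_rpow_mul_exp_neg_mul_Ioi (a := n + 1) (by positivity) hc
  simp only [add_sub_cancel_right, Real.rpow_natCast, Real.Gamma_nat_eq_factorial] at h
  rw [h, one_div, Real.inv_rpow hc.le, ← Real.rpow_natCast]
  push_cast
  ring

theorem integral_abs_pow_mul_exp_neg_mul_abs (n : ℕ) {c : ℝ} (hc : 0 < c) :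
    ∫ t, |t| ^ n * Real.exp (-(c * |t|)) = 2 * (n ! / c ^ (n + 1)) := by
  rw [integral_comp_abs (f := fun u => u ^ n * Real.exp (-(c * u))),
    integral_pow_mul_exp_neg_mul_Ioi n hc]

theorem integral_abs_pow_mul_le_of_le_exp_neg_abs {G : ℝ → ℝ} {c₀ c : ℝ} (hc : 0 < c)
    (hG0 : ∀ t, 0 ≤ G t) (hG : ∀ t, G t ≤ c₀ * Real.exp (-c * |t|)) (n : ℕ) :
    ∫ t, |t| ^ n * G t ≤ 2 * c₀ * n ! / c ^ (n + 1) := by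
  have hint : Integrable fun t => |t| ^ n * Real.exp (-(c * |t|)) := by
    refine .of_integral_ne_zero ?_
    rw [integral_abs_pow_mul_exp_neg_mul_abs n hc]
    positivity
  calc ∫ t, |t| ^ n * G t ≤ ∫ t, c₀ * (|t| ^ n * Real.exp (-(c * |t|))) := by
        refine integral_mono_of_nonneg (.of_forall fun t => by have := hG0 t; positivity)
          (hint.const_mul c₀) (.of_forall fun t => ?_)
        calc |t| ^ n * G t ≤ |t| ^ n * (c₀ * Real.exp (-c * |t|)) := by gcongr; exact hG t
          _ = c₀ * (|t| ^ n * Real.exp (-(c * |t|))) := by ring_nf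
    _ = 2 * c₀ * n ! / c ^ (n + 1) := by
        rw [integral_const_mul, integral_abs_pow_mul_exp_neg_mul_abs n hc]
        ring

theorem inv_factorial_sq_mul_prod_mul_moment_le {ι : Type*} {s : Finset ι} {v : ι → ℝ}
    {x c₀ c : ℝ} {G : ℝ → ℝ} (hc : 0 < c) (hG0 : ∀ t, 0 ≤ G t)
    (hG : ∀ t, G t ≤ c₀ * Real.exp (-c * |t|)) (hx : ∀ i ∈ s, |x - v i| < c / 4) :
    1 / ((#s)! : ℝ) ^ 2 * (∏ i ∈ s, |x - v i| ^ 2) * ∫ t, t ^ (2 * #s) * G t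
      ≤ 2 * c₀ * (2 * #s)! / (c * 4 ^ (2 * #s) * ((#s)! : ℝ) ^ 2) := by
  have hmoment : ∫ t, t ^ (2 * #s) * G t ≤ 2 * c₀ * (2 * #s)! / c ^ (2 * #s + 1) := by
    simpa only [(even_two_mul #s).pow_abs] using
      integral_abs_pow_mul_le_of_le_exp_neg_abs hc hG0 hG (2 * #s)
  have hprod : ∏ i ∈ s, |x - v i| ^ 2 ≤ (c / 4) ^ (2 * #s) := by
    calc ∏ i ∈ s, |x - v i| ^ 2 ≤ ∏ _i ∈ s, (c / 4) ^ 2 := by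
          gcongr with i hi; exact (hx i hi).le
      _ = (c / 4) ^ (2 * #s) := by rw [Finset.prod_const, ← pow_mul, mul_comm]
  have hmoment0 : 0 ≤ ∫ t, t ^ (2 * #s) * G t :=
    integral_nonneg fun t => mul_nonneg ((even_two_mul #s).pow_nonneg t) (hG0 t)
  calc _ ≤ 1 / ((#s)! : ℝ) ^ 2 * (c / 4) ^ (2 * #s) * (2 * c₀ * (2 * #s)! / c ^ (2 * #s + 1)) := by
        gcongr
    _ = 2 * c₀ * (2 * #s)! / (c * 4 ^ (2 * #s) * ((#s)! : ℝ) ^ 2) := by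
        rw [div_pow, pow_succ]
        field_simp
        ring

end

theorem lagrange_approx_bound_general
    (Ghat : ℝ → ℝ)
    (hpos : ∀ t, 0 < Ghat t) (hint : Integrable Ghat)
    (hmom : ∀ n : ℕ, Integrable (fun t : ℝ => t ^ (2 * n) * Ghat t))
    (μ : Measure ℝ) (hμ : μ = volume.withDensity (fun t => ENNReal.ofReal (Ghat t)))
    (φ : ℝ → Lp ℂ 2 μ)
    (hφ : ∀ x : ℝ, (φ x : ℝ → ℂ) =ᵐ[μ]
      fun t => Complex.exp (Complex.I * (x : ℂ) * (t : ℂ)))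
    (K : ℕ) (x : ℝ) (xs : Fin K → ℝ)
    (hinj : Function.Injective xs)
    (lam : Fin K → ℝ)
    (hlam : ∀ k, lam k = ∏ l ∈ Finset.univ.erase k, (x - xs l) / (xs k - xs l)) :
    ‖φ x - ∑ k : Fin K, (lam k : ℂ) • φ (xs k)‖ ^ 2
        ≤ (1 / ((K.factorial : ℝ)) ^ 2) * (∏ k, |x - xs k| ^ 2)
          * ∫ t : ℝ, t ^ (2 * K) * Ghat t
      ∧ ∀ c₀ c : ℝ, 0 < c₀ → 0 < c →
        (∀ t : ℝ, Ghat t ≤ c₀ * Real.exp (-c * |t|)) →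
        (∀ k, |x - xs k| < c / 4) →
        ‖φ x - ∑ k : Fin K, (lam k : ℂ) • φ (xs k)‖ ^ 2
          ≤ 2 * c₀ * ((2 * K).factorial : ℝ) / (c * 4 ^ (2 * K) * ((K.factorial : ℝ)) ^ 2) := by
  have hG0 (t : ℝ) : 0 ≤ Ghat t := (hpos t).le
  set C : ℝ := 1 / (K.factorial : ℝ) ^ 2 * ∏ k, |x - xs k| ^ 2
  have hpoint (t : ℝ) : ‖Complex.exp (Complex.I * x * t)
      - ∑ k, (lam k : ℂ) • Complex.exp (Complex.I * xs k * t)‖ ^ 2 ≤ C * t ^ (2 * K) := by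
    have h := sq_norm_cexp_sub_sum_eval_basis_mul_le (s := univ) hinj.injOn x t
    simpa only [Lagrange.eval_basis, ← hlam, Finset.card_fin, smul_eq_mul] using h
  have hL2 : ‖φ x - ∑ k, (lam k : ℂ) • φ (xs k)‖ ^ 2 ≤ C * ∫ t, t ^ (2 * K) * Ghat t := by
    have hcoe := Lp.coeFn_sub_sum_smul_ae_eq hφ x univ (fun k => (lam k : ℂ)) xs
    subst hμ
    have hB : Integrable (fun t => Ghat t * (C * t ^ (2 * K))) :=
      ((hmom K).const_mul C).congr (.of_forall fun t => by ring)
    refine (L2.sq_norm_le_integral_of_ae_le (𝕜 := ℂ) _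
      ((integrable_withDensity_ofReal_iff hint.aemeasurable hG0).mpr hB)
      (hcoe.mono fun t ht => ht ▸ hpoint t)).trans_eq ?_
    rw [integral_withDensity_ofReal hint.aemeasurable hG0, ← integral_const_mul]
    exact integral_congr_ae (.of_forall fun t => by ring)
  refine ⟨hL2, fun c₀ c _ hc hdecay hclose => hL2.trans ?_⟩
  simpa only [Finset.card_fin] using
    inv_factorial_sq_mul_prod_mul_moment_le (s := univ) hc hG0 hdecay fun k _ => hclose k

/-- The polynomial-interpolation bound on the `L²(ℝ, Ĝ)` error of approximating
`φ_x` by the Lagrange combination of `φ_{x_k}`, together with the explicit bound under the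
exponential decay assumption on `Ĝ`. -/
theorem lagrange_approx_bound
    (Ghat : ℝ → ℝ) (hcont : Continuous Ghat) (heven : ∀ t, Ghat (-t) = Ghat t)
    (hpos : ∀ t, 0 < Ghat t) (hint : Integrable Ghat)
    (hmom : ∀ n : ℕ, Integrable (fun t : ℝ => t ^ (2 * n) * Ghat t))
    (μ : Measure ℝ) (hμ : μ = volume.withDensity (fun t => ENNReal.ofReal (Ghat t)))
    (φ : ℝ → Lp ℂ 2 μ)
    (hφ : ∀ x : ℝ, (φ x : ℝ → ℂ) =ᵐ[μ]
      fun t => Complex.exp (Complex.I * (x : ℂ) * (t : ℂ)))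
    (K : ℕ) (x : ℝ) (xs : Fin K → ℝ)
    (hx : x ∈ Set.Icc (-1 : ℝ) 1) (hxs : ∀ k, xs k ∈ Set.Icc (-1 : ℝ) 1)
    (hinj : Function.Injective xs) (hne : ∀ k, x ≠ xs k)
    (lam : Fin K → ℝ)
    (hlam : ∀ k, lam k = ∏ l ∈ Finset.univ.erase k, (x - xs l) / (xs k - xs l)) :
    ‖φ x - ∑ k : Fin K, (lam k : ℂ) • φ (xs k)‖ ^ 2
        ≤ (1 / ((K.factorial : ℝ)) ^ 2) * (∏ k, |x - xs k| ^ 2)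
          * ∫ t : ℝ, t ^ (2 * K) * Ghat t
      ∧ ∀ c₀ c : ℝ, 0 < c₀ → 0 < c →
        (∀ t : ℝ, Ghat t ≤ c₀ * Real.exp (-c * |t|)) →
        (∀ k, |x - xs k| < c / 4) →
        ‖φ x - ∑ k : Fin K, (lam k : ℂ) • φ (xs k)‖ ^ 2
          ≤ 2 * c₀ * ((2 * K).factorial : ℝ) / (c * 4 ^ (2 * K) * ((K.factorial : ℝ)) ^ 2) :=
  lagrange_approx_bound_general Ghat hpos hint hmom μ hμ φ hφ K x xs hinj lam hlam
end

section
/- Define F(u) = T*(2u+1) − (2u+1) ln u for real u ≥ 1. Then F is monotonically decreasing for sufficiently large argument: there exists K₀ ≥ 1 such that for all real u, v with K₀ ≤ v ≤ u one has F(u) ≤ F(v). -/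
open Filter Topology

/-- Legendre transform `T*(q) = sup_s (qs - T(s))`. -/
noncomputable def legendreTransform (T : ℝ → ℝ) (q : ℝ) : ℝ := ⨆ s : ℝ, (q * s - T s)

/-!
Write `T(s) = S(e^s)` and `f_q(s) = q s - T(s)`. Convexity bounds `S`, hence `T`, from below by
its tangent at `1`, and since `S' → ∞`, for large `q` we have `T' ≥ q` on `[log (q/3), ∞)`; so
`f_q` is bounded above and its supremum `T*(q)` is approached on `s ≤ log (q/3)`. Splitting
`q s = p s + (q - p) s` there gives `T*(q) ≤ T*(p) + (q - p) log (q/3)` for `p ≤ q`. With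
`q = 2u + 1 ≤ 3u` and `p = 2v + 1` this yields `F(u) ≤ T*(p) - p log u ≤ F(v)`.
-/

open Real Set

lemma ConvexOn.add_deriv_mul_sub_le {D : Set ℝ} {f : ℝ → ℝ} {x y : ℝ} (hf : ConvexOn ℝ D f)
    (hx : x ∈ D) (hy : y ∈ D) (hfx : DifferentiableAt ℝ f x) :
    f x + deriv f x * (y - x) ≤ f y := by
  rcases lt_trichotomy x y with hxy | rfl | hyx
  · have h := hf.deriv_le_slope hx hy hxy hfx
    rw [slope_def_field, le_div_iff₀ (sub_pos.2 hxy)] at h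
    linarith
  · simp
  · have h := hf.slope_le_deriv hy hx hyx hfx
    rw [slope_def_field, div_le_iff₀ (sub_pos.2 hyx)] at h
    linarith

lemma ContDiffOn.convexOn_of_deriv2_nonneg {D : Set ℝ} {f : ℝ → ℝ} (hD : Convex ℝ D)
    (hDo : IsOpen D) (hf : ContDiffOn ℝ 2 f D) (hf'' : ∀ x ∈ D, 0 ≤ deriv (deriv f) x) :
    ConvexOn ℝ D f := by
  have hf' : ContDiffOn ℝ 1 (deriv f) D := hf.deriv_of_isOpen hDo (by norm_num)
  refine _root_.convexOn_of_deriv2_nonneg hD hf.continuousOn ?_ ?_ ?_ <;> rw [hDo.interior_eq]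
  · exact hf.differentiableOn (by norm_num)
  · exact hf'.differentiableOn one_ne_zero
  · simpa using hf''

lemma antitoneOn_mul_sub_of_le_deriv {T : ℝ → ℝ} {q b : ℝ} (hT : Differentiable ℝ T)
    (h : ∀ s > b, q ≤ deriv T s) : AntitoneOn (fun s => q * s - T s) (Ici b) := by
  have hd : Differentiable ℝ (fun s => q * s - T s) := by fun_prop
  refine antitoneOn_of_deriv_nonpos (convex_Ici b) hd.continuous.continuousOn
    hd.differentiableOn fun s hs => ?_
  rw [interior_Ici] at hs
  rw [deriv_fun_sub (by fun_prop) (hT s), deriv_const_mul_field', deriv_id'']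
  linarith [h s hs]

lemma exists_antitoneOn_mul_sub_comp_exp {S : ℝ → ℝ} {c : ℝ} (hc : 0 < c)
    (hSd : ∀ t > 0, DifferentiableAt ℝ S t) (hS' : Tendsto (deriv S) atTop atTop) :
    ∃ K, ∀ q ≥ K, AntitoneOn (fun s => q * s - S (exp s)) (Ici (log (q / c))) := by
  obtain ⟨t₀, ht₀⟩ := (hS'.eventually_ge_atTop c).exists_forall_of_atTop
  have hd : ∀ s, HasDerivAt (fun s => S (exp s)) (deriv S (exp s) * exp s) s := fun s =>
    (hSd _ (exp_pos s)).hasDerivAt.comp s (hasDerivAt_exp s)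
  refine ⟨c * max t₀ 1, fun q hq => antitoneOn_mul_sub_of_le_deriv
    (fun s => (hd s).differentiableAt) fun s hs => ?_⟩
  have hq : max t₀ 1 ≤ q / c := by rwa [le_div_iff₀' hc]
  have hs : q / c ≤ exp s := by
    rw [← exp_log (hq.trans_lt' (by positivity))]
    exact exp_le_exp.2 hs.le
  have hc' : c ≤ deriv S (exp s) := ht₀ _ ((le_max_left _ _).trans (hq.trans hs))
  rw [(hd s).deriv]
  calc q = c * (q / c) := by field_simp
    _ ≤ deriv S (exp s) * exp s :=
      mul_le_mul hc' hs (hq.trans' (by positivity)) (hc.le.trans hc')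

lemma bddAbove_range_of_antitoneOn {T : ℝ → ℝ} {q b m : ℝ} (hq : 0 ≤ q) (hT : ∀ s, m ≤ T s)
    (h : AntitoneOn (fun s => q * s - T s) (Ici b)) :
    BddAbove (range fun s => q * s - T s) := by
  refine ⟨max (q * b - T b) (q * b - m), ?_⟩
  rintro _ ⟨s, rfl⟩
  rcases le_total s b with hs | hs
  · exact le_max_of_le_right (by nlinarith [hT s])
  · exact le_max_of_le_left (h (mem_Ici.2 le_rfl) hs hs)

lemma legendreTransform_le_add_of_antitoneOn {T : ℝ → ℝ} {p q b : ℝ} (hpq : p ≤ q)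
    (hp : BddAbove (range fun s => p * s - T s))
    (hq : AntitoneOn (fun s => q * s - T s) (Ici b)) :
    legendreTransform T q ≤ legendreTransform T p + (q - p) * b := by
  have hle : ∀ s ≤ b, q * s - T s ≤ legendreTransform T p + (q - p) * b := fun s hs => by
    have : p * s - T s ≤ legendreTransform T p := le_ciSup hp s
    nlinarith
  refine ciSup_le fun s => ?_
  rcases le_total s b with hs | hs
  · exact hle s hs
  · exact (hq (mem_Ici.2 le_rfl) hs hs).trans (hle b le_rfl)

lemma legendreTransform_sub_mul_log_le {T : ℝ → ℝ} {m K u v : ℝ} (hT : ∀ s, m ≤ T s)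
    (hanti : ∀ q ≥ K, AntitoneOn (fun s => q * s - T s) (Ici (log (q / 3))))
    (hv : 1 ≤ v) (hKv : K ≤ 2 * v + 1) (huv : v ≤ u) :
    legendreTransform T (2 * u + 1) - (2 * u + 1) * log u
      ≤ legendreTransform T (2 * v + 1) - (2 * v + 1) * log v := by
  have hp := bddAbove_range_of_antitoneOn (by linarith) hT (hanti _ hKv)
  have hq := legendreTransform_le_add_of_antitoneOn (by linarith : 2 * v + 1 ≤ 2 * u + 1) hp
    (hanti (2 * u + 1) (by linarith))
  have hb : log ((2 * u + 1) / 3) ≤ log u := log_le_log (by linarith) (by linarith)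
  have hlog : log v ≤ log u := log_le_log (by linarith) huv
  nlinarith [mul_le_mul_of_nonneg_left hb (by linarith : 0 ≤ 2 * (u - v)),
    mul_le_mul_of_nonneg_left hlog (by linarith : 0 ≤ 2 * v + 1)]

/-- `F(u) = T*(2u+1) - (2u+1) ln u` is monotonically decreasing for sufficiently
large real argument. -/
theorem F_eventually_antitone
    (S : ℝ → ℝ) (hS : ContDiffOn ℝ 2 S (Set.Ioi 0))
    (hS' : ∀ t > 0, 0 ≤ deriv S t) (hS'' : ∀ t > 0, 0 ≤ deriv (deriv S) t)
    (hS'inf : Tendsto (deriv S) atTop atTop) :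
    ∃ K₀ : ℝ, 1 ≤ K₀ ∧ ∀ u v : ℝ, K₀ ≤ v → v ≤ u →
      legendreTransform (fun s => S (Real.exp s)) (2 * u + 1) - (2 * u + 1) * Real.log u
        ≤ legendreTransform (fun s => S (Real.exp s)) (2 * v + 1) - (2 * v + 1) * Real.log v := by
  have hSd : ∀ t > 0, DifferentiableAt ℝ S t := fun t ht =>
    (hS.differentiableOn (by norm_num) t ht).differentiableAt (Ioi_mem_nhds ht)
  have hconv := hS.convexOn_of_deriv2_nonneg (convex_Ioi 0) isOpen_Ioi hS''
  have hlower : ∀ s, S 1 - deriv S 1 ≤ S (exp s) := fun s => by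
    have := hconv.add_deriv_mul_sub_le (mem_Ioi.2 one_pos) (exp_pos s) (hSd 1 one_pos)
    nlinarith [hS' 1 one_pos, exp_pos s]
  obtain ⟨K, hK⟩ := exists_antitoneOn_mul_sub_comp_exp three_pos hSd hS'inf
  refine ⟨max K 1, le_max_right _ _, fun u v hv huv => ?_⟩
  exact legendreTransform_sub_mul_log_le hlower hK ((le_max_right _ _).trans hv)
    (by linarith [le_max_left K 1, le_max_right K 1]) huv
end

section
/- Let T : ℝ → ℝ be twice continuously differentiable with T″(s) ≥ 0 for all s, T′(s) → +∞ and T″(s) → +∞ as s → +∞. Then for all sufficiently large positive integers K, ∫_ℝ e^{(2K+1)s − T(s)} ds ≤ (1/2) e^{T*(2K+1)}, where T*(q) = sup_{s∈ℝ}(qs − T(s)). -/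
open Filter Topology MeasureTheory Set

/-!
Write `q = 2K + 1` and `F s = q s - T s`. Since `T` is convex, `F` is maximised at the point `p`
with `T' p = q`, and `F p` is the supremum. Once `q` is large, `p` lies where `T'' ≥ 121`, so `T'`
changes by at least `11` across `[p - 1/11, p]` and `[p, p + 1/11]`; the tangent lines of `T` at
`p` and `p ± 1/11` then put `F` below the tent `F p + 1 - 11 |s - p|`. Integrating,
`∫ exp F ≤ (2e/11) exp (F p)`, and `2e/11 < 1/2`.
-/

lemma integral_exp_neg_mul_abs_sub {c : ℝ} (hc : 0 < c) (m : ℝ) :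
    ∫ x : ℝ, Real.exp (-c * |x - m|) = 2 / c := by
  rw [integral_sub_right_eq_self (fun x => Real.exp (-c * |x|)) m,
    integral_comp_abs (f := fun x => Real.exp (-c * x)), integral_exp_mul_Ioi (neg_lt_zero.2 hc)]
  simp [div_eq_mul_inv]

lemma integrable_exp_neg_mul_abs_sub {c : ℝ} (hc : 0 < c) (m : ℝ) :
    Integrable (fun x : ℝ => Real.exp (-c * |x - m|)) :=
  Integrable.of_integral_ne_zero (by rw [integral_exp_neg_mul_abs_sub hc]; positivity)

lemma integral_exp_le_of_le_sub_mul_abs {F : ℝ → ℝ} {M c p : ℝ} (hc : 0 < c)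
    (hF : ∀ s, F s ≤ M - c * |s - p|) :
    ∫ s, Real.exp (F s) ≤ 2 / c * Real.exp M := by
  calc ∫ s, Real.exp (F s) ≤ ∫ s, Real.exp M * Real.exp (-c * |s - p|) := by
        refine integral_mono_of_nonneg (.of_forall fun s => (Real.exp_pos _).le)
          ((integrable_exp_neg_mul_abs_sub hc p).const_mul _) (.of_forall fun s => ?_)
        dsimp only
        rw [← Real.exp_add, Real.exp_le_exp]
        linarith [hF s]
    _ = 2 / c * Real.exp M := by
        rw [integral_const_mul, integral_exp_neg_mul_abs_sub hc, mul_comm]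

section MonotoneDeriv

variable {T : ℝ → ℝ} (hT : Differentiable ℝ T) (hmono : Monotone (deriv T))
include hT hmono

lemma add_deriv_mul_sub_le_of_monotone_deriv (x y : ℝ) :
    T x + deriv T x * (y - x) ≤ T y := by
  have hconv : ConvexOn ℝ univ T := hmono.convexOn_univ_of_deriv hT
  rcases lt_trichotomy x y with hxy | rfl | hxy
  · have := hconv.deriv_le_slope (mem_univ x) (mem_univ y) hxy (hT x)
    rw [slope_def_field, le_div_iff₀ (sub_pos.2 hxy)] at this
    linarith
  · simp
  · have := hconv.slope_le_deriv (mem_univ y) (mem_univ x) hxy (hT x)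
    rw [slope_def_field, div_le_iff₀ (sub_pos.2 hxy)] at this
    linarith

lemma iSup_mul_sub_eq_of_deriv_eq {p q : ℝ} (hp : deriv T p = q) :
    ⨆ s, (q * s - T s) = q * p - T p :=
  ciSup_eq_of_forall_le_of_forall_lt_exists_gt
    (fun s => by linarith [hp ▸ add_deriv_mul_sub_le_of_monotone_deriv hT hmono p s])
    (fun _ hw => ⟨p, hw⟩)

lemma deriv_mul_sub_le_tent {p δ c : ℝ} (hδ : 0 ≤ δ) (hc : 0 ≤ c)
    (hleft : deriv T (p - δ) + c ≤ deriv T p) (hright : deriv T p + c ≤ deriv T (p + δ))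
    (s : ℝ) :
    deriv T p * s - T s ≤ deriv T p * p - T p + c * δ - c * |s - p| := by
  have tangent := add_deriv_mul_sub_le_of_monotone_deriv hT hmono
  have hp := tangent p s
  rcases le_or_gt (p + δ) s with hs | hs
  · have h₁ := tangent (p + δ) s
    have h₂ := tangent p (p + δ)
    have h₃ := mul_le_mul_of_nonneg_right hright (sub_nonneg.2 hs)
    rw [abs_of_nonneg (by linarith)]
    linarith
  rcases le_or_gt s (p - δ) with hs' | hs'
  · have h₁ := tangent (p - δ) s
    have h₂ := tangent p (p - δ)
    have h₃ := mul_le_mul_of_nonpos_right hleft (sub_nonpos.2 hs')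
    rw [abs_of_nonpos (by linarith)]
    linarith
  · have hsp : |s - p| < δ := abs_sub_lt_iff.2 ⟨by linarith, by linarith⟩
    nlinarith

end MonotoneDeriv

/-- Laplace-method upper bound: if `T` is `C²`, convex, with `T' → ∞` and
`T'' → ∞` at `+∞`, then for all sufficiently large positive integers `K`,
`∫ e^{(2K+1)s - T(s)} ds ≤ (1/2) e^{T*(2K+1)}`. -/
theorem laplace_upper_bound
    (T : ℝ → ℝ) (hT : ContDiff ℝ 2 T)
    (hconv : ∀ s : ℝ, 0 ≤ deriv (deriv T) s)
    (hT' : Tendsto (deriv T) atTop atTop)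
    (hT'' : Tendsto (deriv (deriv T)) atTop atTop) :
    ∃ K₀ : ℕ, 1 ≤ K₀ ∧ ∀ K : ℕ, K₀ ≤ K →
      ∫ s : ℝ, Real.exp ((2 * K + 1) * s - T s)
        ≤ (1 / 2) * Real.exp (⨆ s : ℝ, ((2 * K + 1) * s - T s)) := by
  have hT₁ : Differentiable ℝ T := hT.differentiable (by norm_num)
  have hT₂ : Differentiable ℝ (deriv T) := hT.differentiable_deriv_two
  have hmono : Monotone (deriv T) := monotone_of_deriv_nonneg hT₂ hconv
  obtain ⟨s₁, hs₁⟩ := eventually_atTop.mp (hT''.eventually_ge_atTop 121)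
  have hgrowth := (convex_Ici s₁).mul_sub_le_image_sub_of_le_deriv hT₂.continuous.continuousOn
    hT₂.differentiableOn (fun x hx => hs₁ x (interior_Ici (a := s₁) ▸ hx).le)
  refine ⟨max 1 ⌈deriv T (s₁ + 1 / 11)⌉₊, le_max_left _ _, fun K hK => ?_⟩
  have hq : deriv T (s₁ + 1 / 11) ≤ 2 * K + 1 := by
    have := (Nat.le_ceil _).trans (Nat.cast_le.2 ((le_max_right _ _).trans hK))
    linarith [(Nat.cast_nonneg K : (0 : ℝ) ≤ K)]
  obtain ⟨p, hp : s₁ + 1 / 11 ≤ p, hTp⟩ :=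
    intermediate_value_Ici hT₂.continuous.continuousOn hT' hq
  have hleft := hgrowth (p - 1 / 11) (mem_Ici.2 (by linarith)) p (mem_Ici.2 (by linarith))
    (by linarith)
  have hright := hgrowth p (mem_Ici.2 (by linarith)) (p + 1 / 11) (mem_Ici.2 (by linarith))
    (by linarith)
  have htent := deriv_mul_sub_le_tent hT₁ hmono (p := p) (δ := 1 / 11) (c := 11)
    (by norm_num) (by norm_num) (by linarith) (by linarith)
  rw [hTp] at htent
  rw [iSup_mul_sub_eq_of_deriv_eq hT₁ hmono hTp]
  calc _ ≤ 2 / 11 * Real.exp ((2 * K + 1) * p - T p + 1) :=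
        integral_exp_le_of_le_sub_mul_abs (by norm_num) (fun s => by linarith [htent s])
    _ ≤ 1 / 2 * Real.exp ((2 * K + 1) * p - T p) := by
        rw [Real.exp_add]
        nlinarith [Real.exp_one_lt_d9, Real.exp_pos ((2 * K + 1) * p - T p)]
end

section
/- Let z ∈ ℂ and let z₁, …, z_K ∈ ℂ be pairwise distinct. Let v = (1, z, z², …, z^K) ∈ ℂ^{K+1} and v_k = (1, z_k, z_k², …, z_k^K) ∈ ℂ^{K+1} for k = 1,…,K. Then the standard ℓ² distance ρ in ℂ^{K+1} from v to the linear span of {v₁,…,v_K} equals ρ = ∏_{k=1}^K |z − z_k| / (1 + Σ_{q=1}^K |Σ_{1≤k₁<…<k_q≤K} ∏_{t=1}^q z_{k_t}|²)^{1/2}, where the inner sums are the elementary symmetric polynomials e_q(z₁,…,z_K). -/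
/-!
With `P = ∏ k, (X - C z_k)` and `u` the conjugated coefficient vector of `P`, one has
`⟪u, v(x)⟫ = P(x)` for every Vandermonde vector `v(x)`. Hence every `v_k` is orthogonal to `u`,
and since the `v_k` are linearly independent (Vandermonde determinant), their span is exactly the
hyperplane `uᗮ`. The distance to it is `‖⟪u, v⟫‖ / ‖u‖ = ∏ |z - z_k| / ‖u‖`, and by Vieta's
formulas the coefficients of `P` are `±e_q(z₁,…,z_K)`.
-/

open Polynomial Finset

section Projection

variable {𝕜 E : Type*} [RCLike 𝕜] [NormedAddCommGroup E] [InnerProductSpace 𝕜 E]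

theorem Submodule.infDist_eq_norm_sub_starProjection (K : Submodule 𝕜 E)
    [K.HasOrthogonalProjection] (v : E) :
    Metric.infDist v (K : Set E) = ‖v - K.starProjection v‖ := by
  rw [Metric.infDist_eq_iInf, K.starProjection_minimal]
  exact iInf_congr fun w => dist_eq_norm v w

theorem infDist_orthogonal_span_singleton (u v : E) :
    Metric.infDist v ((𝕜 ∙ u)ᗮ : Set E) = ‖(inner 𝕜 u v : 𝕜)‖ / ‖u‖ := by
  rw [Submodule.infDist_eq_norm_sub_starProjection, Submodule.starProjection_orthogonal_val,
    sub_sub_cancel, Submodule.starProjection_singleton, norm_smul, norm_div, RCLike.norm_ofReal,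
    abs_pow, abs_norm]
  rcases eq_or_ne ‖u‖ 0 with hu | hu
  · simp [hu]
  · field_simp

end Projection

theorem linearIndependent_pow_of_injective {K : Type*} [Field K] {m n : ℕ} (hmn : m ≤ n)
    {v : Fin m → K} (hv : Function.Injective v) :
    LinearIndependent K fun k (i : Fin n) => v k ^ (i : ℕ) := by
  have hrows : LinearIndependent K fun k => Matrix.vandermonde v k :=
    Matrix.linearIndependent_rows_iff_isUnit.2 <| (Matrix.isUnit_iff_isUnit_det _).2 <|
      isUnit_iff_ne_zero.2 <| Matrix.det_vandermonde_ne_zero_iff.2 hv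
  exact LinearIndependent.of_comp (LinearMap.funLeft K K (Fin.castLE hmn)) hrows

theorem norm_coeff_prod_X_sub_C {R ι : Type*} [SeminormedCommRing R] (s : Finset ι) (f : ι → R)
    {k : ℕ} (hk : k ≤ #s) :
    ‖(∏ i ∈ s, (X - C (f i))).coeff k‖ = ‖∑ t ∈ s.powersetCard (#s - k), ∏ i ∈ t, f i‖ := by
  have hprod : ∏ i ∈ s, (X - C (f i)) = ((s.val.map f).map fun a => X - C a).prod := by
    rw [Finset.prod, Multiset.map_map]; rfl
  rw [hprod, Multiset.prod_X_sub_C_coeff _ (by simpa using hk), Multiset.card_map, card_val,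
    esymm_map_val]
  rcases neg_one_pow_eq_or R (#s - k) with h | h <;> simp [h]

theorem sum_norm_sq_coeff_prod_X_sub_C {R : Type*} [SeminormedCommRing R] [NormOneClass R]
    {K : ℕ} (zs : Fin K → R) :
    ∑ i ∈ range (K + 1), ‖(∏ k, (X - C (zs k))).coeff i‖ ^ 2 =
      1 + ∑ q ∈ Icc 1 K, ‖∑ t ∈ univ.powersetCard q, ∏ k ∈ t, zs k‖ ^ 2 := by
  have hreflect : ∀ q ∈ range (K + 1), ‖(∏ k, (X - C (zs k))).coeff (K + 1 - 1 - q)‖ =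
      ‖∑ t ∈ univ.powersetCard q, ∏ k ∈ t, zs k‖ := fun q hq => by
    have hq : q ≤ K := Nat.lt_succ_iff.1 (mem_range.1 hq)
    rw [norm_coeff_prod_X_sub_C _ _ (by simp), card_univ, Fintype.card_fin]
    congr 3; omega
  have hsplit : range (K + 1) = insert 0 (Icc 1 K) := by
    ext q; simp only [mem_range, mem_insert, mem_Icc]; omega
  rw [← sum_range_reflect, sum_congr rfl fun q hq => by rw [hreflect q hq], hsplit,
    sum_insert (by simp)]
  simp

section Vectors

variable {𝕜 : Type*} [RCLike 𝕜] (n : ℕ)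

def vandermondeVec (x : 𝕜) : EuclideanSpace 𝕜 (Fin n) :=
  WithLp.toLp 2 fun i => x ^ (i : ℕ)

def conjCoeffVec (p : 𝕜[X]) : EuclideanSpace 𝕜 (Fin n) :=
  WithLp.toLp 2 fun i => star (p.coeff i)

variable {n}

theorem inner_conjCoeffVec_vandermondeVec {p : 𝕜[X]} (hp : p.natDegree < n) (x : 𝕜) :
    inner 𝕜 (conjCoeffVec n p) (vandermondeVec n x) = p.eval x := by
  rw [PiLp.inner_apply, p.eval_eq_sum_range' hp, ← Fin.sum_univ_eq_sum_range]
  simp [conjCoeffVec, vandermondeVec, mul_comm]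

theorem norm_conjCoeffVec (p : 𝕜[X]) :
    ‖conjCoeffVec n p‖ = √(∑ i ∈ range n, ‖p.coeff i‖ ^ 2) := by
  rw [EuclideanSpace.norm_eq, ← Fin.sum_univ_eq_sum_range (fun i => ‖p.coeff i‖ ^ 2)]
  simp [conjCoeffVec]

theorem span_vandermondeVec_eq_orthogonal {K : ℕ} {zs : Fin K → 𝕜}
    (hzs : Function.Injective zs) :
    Submodule.span 𝕜 (Set.range fun k => vandermondeVec (K + 1) (zs k)) =
      (𝕜 ∙ conjCoeffVec (K + 1) (∏ k, (X - C (zs k))))ᗮ := by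
  set P : 𝕜[X] := ∏ k, (X - C (zs k))
  have hPm : P.Monic := monic_prod_X_sub_C zs univ
  have hPdeg : P.natDegree = K := by
    simp [P]
  have hle : Submodule.span 𝕜 (Set.range fun k => vandermondeVec (K + 1) (zs k)) ≤
      (𝕜 ∙ conjCoeffVec (K + 1) P)ᗮ := by
    rw [Submodule.span_le, Set.range_subset_iff]
    intro k
    rw [SetLike.mem_coe, Submodule.mem_orthogonal_singleton_iff_inner_right,
      inner_conjCoeffVec_vandermondeVec (by omega), eval_prod]
    exact prod_eq_zero (mem_univ k) (by simp)
  have hlast : conjCoeffVec (K + 1) P (Fin.last K) = 1 := by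
    simp [conjCoeffVec, ← hPdeg, hPm.leadingCoeff]
  have hu : conjCoeffVec (K + 1) P ≠ 0 := fun h => by simp [h] at hlast
  have hind : LinearIndependent 𝕜 fun k => vandermondeVec (K + 1) (zs k) :=
    (linearIndependent_pow_of_injective K.le_succ hzs).map'
      (WithLp.linearEquiv 2 𝕜 (Fin (K + 1) → 𝕜)).symm.toLinearMap (LinearEquiv.ker _)
  refine Submodule.eq_of_le_of_finrank_eq hle ?_
  have : Fact (Module.finrank 𝕜 (EuclideanSpace 𝕜 (Fin (K + 1))) = K + 1) :=
    ⟨finrank_euclideanSpace_fin⟩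
  rw [finrank_span_eq_card hind, Fintype.card_fin]
  exact (Submodule.finrank_orthogonal_span_singleton hu).symm

end Vectors

/-- the ℓ² distance in ℂ^{K+1} from `v = (1, z, …, z^K)` to the span of the
Vandermonde vectors `v_k = (1, z_k, …, z_k^K)` (with `z₁,…,z_K` pairwise distinct) equals
`∏|z - z_k| / (1 + Σ_{q=1}^K |e_q(z₁,…,z_K)|²)^{1/2}`. -/
theorem dist_to_vandermonde_span
    (K : ℕ) (z : ℂ) (zs : Fin K → ℂ) (hzs : Function.Injective zs) :
    Metric.infDist
        ((WithLp.equiv 2 (Fin (K + 1) → ℂ)).symm (fun i : Fin (K + 1) => z ^ (i : ℕ)))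
        ((Submodule.span ℂ (Set.range fun k : Fin K =>
            (WithLp.equiv 2 (Fin (K + 1) → ℂ)).symm (fun i : Fin (K + 1) => zs k ^ (i : ℕ))) :
          Submodule ℂ (EuclideanSpace ℂ (Fin (K + 1)))) : Set (EuclideanSpace ℂ (Fin (K + 1))))
      = (∏ k, ‖z - zs k‖) /
          Real.sqrt (1 + ∑ q ∈ Finset.Icc 1 K,
            ‖∑ t ∈ Finset.univ.powersetCard q, ∏ k ∈ t, zs k‖ ^ 2) := by
  change Metric.infDist (vandermondeVec (K + 1) z)
    (Submodule.span ℂ (Set.range fun k => vandermondeVec (K + 1) (zs k)) : Set _) = _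
  rw [span_vandermondeVec_eq_orthogonal hzs, infDist_orthogonal_span_singleton,
    inner_conjCoeffVec_vandermondeVec (by simp), norm_conjCoeffVec,
    sum_norm_sq_coeff_prod_X_sub_C, eval_prod, norm_prod]
  simp only [eval_sub, eval_X, eval_C]
end

section
/- Assume in addition that Ĝ is nonincreasing on [0,∞). Let x ∈ [−1,1], let x₁, …, x_K ∈ [−1,1] be pairwise distinct, and let 0 < t₀ < π/2. Then inf over (λ₁,…,λ_K) ∈ ℝ^K of ∫_ℝ |e^{ixt} − Σ_{k=1}^K λ_k e^{ix_k t}|² Ĝ(t) dt ≥ Ĝ((K+1)t₀/2) · (t₀^{2K+1}/π^{2K}) · ∏_{k=1}^K |x − x_k|². -/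
/-!
Write `f(t) = e^{ixt} - Σₖ λₖ e^{ixₖt}`. The difference operator `∏ₖ (τ_{t₀} - e^{ixₖt₀})`,
`τ_{t₀}` the translation by `t₀`, kills every `e^{ixₖt}` and multiplies `e^{ixt}` by
`P = ∏ₖ (e^{ixt₀} - e^{ixₖt₀})`, so it maps `f` to a function of constant modulus `|P|`; on the
other hand it is a combination of `2^K` translates `f(· + j t₀)`, `0 ≤ j ≤ K`, with unimodular
coefficients. Hence `|P|² ≤ 2^K Σ |f(· + j t₀)|²`, and integrating over an interval of length `t₀`
gives `|P|² t₀ ≤ 4^K ∫_{-b}^{b} |f|²` with `b = (K+1)t₀/2`. Jordan's inequality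
`|e^{iθ} - 1| ≥ 2|θ|/π` for `|θ| ≤ π` gives `|P| ≥ (2t₀/π)^K ∏ₖ |x - xₖ|`, and `Ĝ ≥ Ĝ(b)` on
`[-b, b]`.
-/

open MeasureTheory Finset Complex

section ProdShiftSub

variable {ι : Type*} [DecidableEq ι] (s : Finset ι) (a : ι → ℂ) (h : ℝ)

/-- The difference operator `∏ k ∈ s, (τ_h - a k)`, where `τ_h f = f (· + h)`, expanded over the
subsets of `s`. -/
noncomputable def prodShiftSub : (ℝ → ℂ) →ₗ[ℂ] (ℝ → ℂ) where
  toFun f t := ∑ S ∈ s.powerset, (∏ k ∈ s \ S, -a k) * f (t + #S * h)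
  map_add' f g := by
    ext t
    simp only [Pi.add_apply, mul_add, sum_add_distrib]
  map_smul' c f := by
    ext t
    simp only [Pi.smul_apply, smul_eq_mul, RingHom.id_apply, mul_sum]
    exact sum_congr rfl fun S _ => by ring

variable {s a h}

lemma prodShiftSub_apply (f : ℝ → ℂ) (t : ℝ) :
    prodShiftSub s a h f t = ∑ S ∈ s.powerset, (∏ k ∈ s \ S, -a k) * f (t + #S * h) :=
  rfl

lemma prodShiftSub_of_add_eq_mul {f : ℝ → ℂ} {c : ℂ} (hf : ∀ t, f (t + h) = c * f t) (t : ℝ) :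
    prodShiftSub s a h f t = (∏ k ∈ s, (c - a k)) * f t := by
  have hpow : ∀ n : ℕ, f (t + n * h) = c ^ n * f t := by
    intro n
    induction n with
    | zero => simp
    | succ n ih =>
      rw [Nat.cast_succ, add_one_mul, ← add_assoc, hf, ih, pow_succ]
      ring
  rw [prodShiftSub_apply]
  simp only [sub_eq_add_neg, prod_add, sum_mul, hpow, prod_const]
  exact sum_congr rfl fun S _ => by ring

lemma continuous_prodShiftSub {f : ℝ → ℂ} (hf : Continuous f) :
    Continuous (prodShiftSub s a h f) :=
  continuous_finsetSum _ fun _ _ => continuous_const.mul (hf.comp (continuous_add_const _))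

lemma norm_prodShiftSub_sq_le (ha : ∀ k ∈ s, ‖a k‖ ≤ 1) (f : ℝ → ℂ) (t : ℝ) :
    ‖prodShiftSub s a h f t‖ ^ 2 ≤ 2 ^ #s * ∑ S ∈ s.powerset, ‖f (t + #S * h)‖ ^ 2 := by
  have hcoeff : ∀ S, ‖∏ k ∈ s \ S, -a k‖ ≤ 1 := fun S => by
    rw [norm_prod]
    exact prod_le_one (fun _ _ => norm_nonneg _)
      fun k hk => (norm_neg (a k)).trans_le (ha k (mem_sdiff.1 hk).1)
  have hnorm : ‖prodShiftSub s a h f t‖ ≤ ∑ S ∈ s.powerset, ‖f (t + #S * h)‖ := by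
    refine (norm_sum_le _ _).trans (sum_le_sum fun S _ => ?_)
    rw [norm_mul]
    exact mul_le_of_le_one_left (norm_nonneg _) (hcoeff S)
  calc ‖prodShiftSub s a h f t‖ ^ 2 ≤ (∑ S ∈ s.powerset, ‖f (t + #S * h)‖) ^ 2 := by gcongr
    _ ≤ #s.powerset * ∑ S ∈ s.powerset, ‖f (t + #S * h)‖ ^ 2 := sq_sum_le_card_mul_sum_sq
    _ = 2 ^ #s * ∑ S ∈ s.powerset, ‖f (t + #S * h)‖ ^ 2 := by rw [card_powerset]; push_cast; rfl

lemma integral_norm_prodShiftSub_sq_le (ha : ∀ k ∈ s, ‖a k‖ ≤ 1) {f : ℝ → ℂ} (hf : Continuous f)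
    (hh : 0 ≤ h) (u : ℝ) :
    ∫ t in u..u + h, ‖prodShiftSub s a h f t‖ ^ 2
      ≤ 4 ^ #s * ∫ t in u..u + (#s + 1) * h, ‖f t‖ ^ 2 := by
  have hf2 : Continuous fun t => ‖f t‖ ^ 2 := by fun_prop
  have hpiece : ∀ S ∈ s.powerset,
      ∫ t in u + #S * h..u + h + #S * h, ‖f t‖ ^ 2 ≤ ∫ t in u..u + (#s + 1) * h, ‖f t‖ ^ 2 := by
    intro S hS
    have hcard : (#S : ℝ) ≤ #s := by exact_mod_cast card_le_card (mem_powerset.1 hS)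
    refine intervalIntegral.integral_mono_interval (by nlinarith) (by linarith) (by nlinarith)
      (ae_of_all _ fun _ => by positivity) (hf2.intervalIntegrable _ _)
  calc ∫ t in u..u + h, ‖prodShiftSub s a h f t‖ ^ 2
      ≤ ∫ t in u..u + h, 2 ^ #s * ∑ S ∈ s.powerset, ‖f (t + #S * h)‖ ^ 2 :=
        intervalIntegral.integral_mono_on (by linarith)
          ((continuous_prodShiftSub hf).norm.pow 2 |>.intervalIntegrable _ _)
          (Continuous.intervalIntegrable (by fun_prop) _ _)
          fun t _ => norm_prodShiftSub_sq_le ha f t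
    _ = 2 ^ #s * ∑ S ∈ s.powerset, ∫ t in u + #S * h..u + h + #S * h, ‖f t‖ ^ 2 := by
        rw [intervalIntegral.integral_const_mul, intervalIntegral.integral_finsetSum]
        · exact congrArg _ (sum_congr rfl fun S _ =>
            intervalIntegral.integral_comp_add_right (fun t => ‖f t‖ ^ 2) _)
        · exact fun S _ => (hf2.comp (continuous_add_const _)).intervalIntegrable _ _
    _ ≤ 2 ^ #s * ∑ _S ∈ s.powerset, ∫ t in u..u + (#s + 1) * h, ‖f t‖ ^ 2 := by
        gcongr with S hS
        exact hpiece S hS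
    _ = 4 ^ #s * ∫ t in u..u + (#s + 1) * h, ‖f t‖ ^ 2 := by
        rw [sum_const, card_powerset, nsmul_eq_mul, ← mul_assoc]
        norm_num [← mul_pow]

end ProdShiftSub

lemma exp_I_mul_ofReal_add (z t h : ℝ) :
    exp (I * z * ↑(t + h)) = exp (I * z * h) * exp (I * z * t) := by
  rw [← Complex.exp_add]
  push_cast
  ring_nf

lemma norm_exp_I_mul_ofReal_mul (z t : ℝ) : ‖exp (I * z * t)‖ = 1 := by
  rw [show I * z * t = ((z * t : ℝ) : ℂ) * I by push_cast; ring]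
  exact norm_exp_ofReal_mul_I _

lemma norm_exp_sub_sum_le {ι : Type*} (s : Finset ι) (x : ℝ) (ω : ι → ℝ) (c : ι → ℂ) (t : ℝ) :
    ‖exp (I * x * t) - ∑ k ∈ s, c k * exp (I * ω k * t)‖ ≤ 1 + ∑ k ∈ s, ‖c k‖ := by
  refine (norm_sub_le _ _).trans ?_
  rw [norm_exp_I_mul_ofReal_mul]
  gcongr
  refine (norm_sum_le _ _).trans_eq (sum_congr rfl fun k _ => ?_)
  rw [norm_mul, norm_exp_I_mul_ofReal_mul, mul_one]

lemma integrable_norm_exp_sub_sum_sq_mul {ι : Type*} (s : Finset ι) (x : ℝ) (ω : ι → ℝ)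
    (c : ι → ℂ) {G : ℝ → ℝ} (hG : Integrable G) :
    Integrable fun t : ℝ => ‖exp (I * x * t) - ∑ k ∈ s, c k * exp (I * ω k * t)‖ ^ 2 * G t := by
  refine hG.bdd_mul (c := (1 + ∑ k ∈ s, ‖c k‖) ^ 2) (by fun_prop) (ae_of_all _ fun t => ?_)
  rw [norm_pow, norm_norm]
  exact pow_le_pow_left₀ (norm_nonneg _) (norm_exp_sub_sum_le s x ω c t) 2

theorem norm_prod_exp_sub_sq_mul_le_integral {ι : Type*} [DecidableEq ι] (s : Finset ι)
    (x : ℝ) (ω : ι → ℝ) (c : ι → ℂ) {h : ℝ} (hh : 0 ≤ h) (u : ℝ) :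
    ‖∏ k ∈ s, (exp (I * x * h) - exp (I * ω k * h))‖ ^ 2 * h
      ≤ 4 ^ #s * ∫ t in u..u + (#s + 1) * h,
          ‖exp (I * x * t) - ∑ k ∈ s, c k * exp (I * ω k * t)‖ ^ 2 := by
  set χ : ℝ → ℝ → ℂ := fun z t => exp (I * z * t)
  set Δ := prodShiftSub s (fun k => exp (I * ω k * h)) h
  have hχ : ∀ z t, Δ (χ z) t = (∏ k ∈ s, (exp (I * z * h) - exp (I * ω k * h))) * χ z t :=
    fun z => prodShiftSub_of_add_eq_mul fun t => exp_I_mul_ofReal_add z t h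
  have hF : (fun t : ℝ => exp (I * x * t) - ∑ k ∈ s, c k * exp (I * ω k * t))
      = χ x - ∑ k ∈ s, c k • χ (ω k) := by
    ext t
    simp [χ, Finset.sum_apply]
  have hΔF : ∀ t, ‖Δ (χ x - ∑ k ∈ s, c k • χ (ω k)) t‖
      = ‖∏ k ∈ s, (exp (I * x * h) - exp (I * ω k * h))‖ := by
    intro t
    have hkill : ∑ k ∈ s, Δ (c k • χ (ω k)) t = 0 := sum_eq_zero fun k hk => by
      rw [map_smul, Pi.smul_apply, hχ, prod_eq_zero hk (sub_self _), zero_mul, smul_zero]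
    rw [map_sub, map_sum, Pi.sub_apply, Finset.sum_apply, hkill, sub_zero, hχ, norm_mul,
      norm_exp_I_mul_ofReal_mul, mul_one]
  have hcont : Continuous (χ x - ∑ k ∈ s, c k • χ (ω k)) := by
    rw [← hF]
    fun_prop
  calc ‖∏ k ∈ s, (exp (I * x * h) - exp (I * ω k * h))‖ ^ 2 * h
      = ∫ t in u..u + h, ‖Δ (χ x - ∑ k ∈ s, c k • χ (ω k)) t‖ ^ 2 := by
        simp only [hΔF, intervalIntegral.integral_const, add_sub_cancel_left, smul_eq_mul]
        ring
    _ ≤ _ := integral_norm_prodShiftSub_sq_le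
        (fun k _ => (norm_exp_I_mul_ofReal_mul _ _).le) hcont hh u
    _ = _ := by rw [← hF]

lemma two_div_pi_mul_abs_le_norm_exp_sub_exp {x y t : ℝ} (h : |(x - y) * t| ≤ Real.pi) :
    2 / Real.pi * |(x - y) * t| ≤ ‖exp (I * x * t) - exp (I * y * t)‖ := by
  have hfactor : exp (I * x * t) - exp (I * y * t)
      = (exp (I * ↑((x - y) * t)) - 1) * exp (I * y * t) := by
    rw [sub_mul, one_mul, ← Complex.exp_add]
    push_cast
    ring_nf
  rw [hfactor, norm_mul, norm_exp_I_mul_ofReal_mul, mul_one, norm_exp_I_mul_ofReal_sub_one,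
    norm_mul, Real.norm_eq_abs, Real.norm_eq_abs, abs_two]
  have hsin := Real.mul_abs_le_abs_sin (x := (x - y) * t / 2)
    (by rw [abs_div, abs_two]; linarith)
  rw [abs_div, abs_two] at hsin
  linarith

lemma pow_mul_prod_abs_le_norm_prod_exp_sub {ι : Type*} (s : Finset ι) (x : ℝ) (ω : ι → ℝ)
    {t : ℝ} (ht : 0 ≤ t) (hω : ∀ k ∈ s, |x - ω k| * t ≤ Real.pi) :
    (2 * t / Real.pi) ^ #s * ∏ k ∈ s, |x - ω k|
      ≤ ‖∏ k ∈ s, (exp (I * x * t) - exp (I * ω k * t))‖ := by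
  rw [← prod_const, ← prod_mul_distrib, norm_prod]
  refine prod_le_prod (fun k _ => by positivity) fun k hk => ?_
  have := two_div_pi_mul_abs_le_norm_exp_sub_exp (x := x) (y := ω k) (t := t)
    (by rw [abs_mul, abs_of_nonneg ht]; exact hω k hk)
  rw [abs_mul, abs_of_nonneg ht] at this
  exact this.trans_eq' (by ring)

lemma mul_intervalIntegral_le_integral_mul {φ G : ℝ → ℝ} {a b c : ℝ} (hab : a ≤ b)
    (hφ : ∀ t, 0 ≤ φ t) (hG : ∀ t, 0 ≤ G t) (hφi : IntervalIntegrable φ volume a b)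
    (hφG : Integrable fun t => φ t * G t) (hc : ∀ t ∈ Set.Icc a b, c ≤ G t) :
    c * ∫ t in a..b, φ t ≤ ∫ t, φ t * G t := by
  rw [← intervalIntegral.integral_const_mul, intervalIntegral.integral_of_le hab]
  calc ∫ t in Set.Ioc a b, c * φ t ≤ ∫ t in Set.Ioc a b, φ t * G t :=
        setIntegral_mono_on (hφi.1.const_mul c) hφG.integrableOn measurableSet_Ioc
          fun t ht => by
            rw [mul_comm]
            exact mul_le_mul_of_nonneg_left (hc t (Set.Ioc_subset_Icc_self ht)) (hφ t)
    _ ≤ ∫ t, φ t * G t :=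
        setIntegral_le_integral hφG (ae_of_all _ fun t => mul_nonneg (hφ t) (hG t))

lemma le_of_abs_le_of_even_of_antitoneOn {G : ℝ → ℝ} (heven : ∀ t, G (-t) = G t)
    (hmono : ∀ s t : ℝ, 0 ≤ s → s ≤ t → G t ≤ G s) {b t : ℝ} (ht : |t| ≤ b) : G b ≤ G t := by
  have habs : G |t| = G t := by
    rcases abs_choice t with h | h <;> rw [h]
    exact heven t
  exact habs ▸ hmono _ _ (abs_nonneg t) ht

theorem condVar_lower_bound_general
    (Ghat : ℝ → ℝ) (heven : ∀ t, Ghat (-t) = Ghat t)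
    (hpos : ∀ t, 0 < Ghat t) (hint : Integrable Ghat)
    (hmono : ∀ s t : ℝ, 0 ≤ s → s ≤ t → Ghat t ≤ Ghat s)
    (x : ℝ) (hx : x ∈ Set.Icc (-1 : ℝ) 1)
    (K : ℕ) (xs : Fin K → ℝ) (hxs : ∀ k, xs k ∈ Set.Icc (-1 : ℝ) 1)
    (t₀ : ℝ) (ht₀ : 0 < t₀) (ht₀' : t₀ < Real.pi / 2) :
    Ghat ((K + 1) * t₀ / 2) * (t₀ ^ (2 * K + 1) / Real.pi ^ (2 * K)) * ∏ k, |x - xs k| ^ 2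
      ≤ ⨅ lam : Fin K → ℝ, ∫ t : ℝ,
          ‖Complex.exp (Complex.I * (x : ℂ) * (t : ℂ))
            - ∑ k, (lam k : ℂ) * Complex.exp (Complex.I * (xs k : ℂ) * (t : ℂ))‖ ^ 2
          * Ghat t := by
  refine le_ciInf fun lam => ?_
  set b : ℝ := (K + 1) * t₀ / 2
  set F : ℝ → ℂ := fun t => exp (I * x * t) - ∑ k, (lam k : ℂ) * exp (I * xs k * t)
  set P : ℂ := ∏ k, (exp (I * x * t₀) - exp (I * xs k * t₀))
  have hturan : ‖P‖ ^ 2 * t₀ ≤ 4 ^ K * ∫ t in -b..b, ‖F t‖ ^ 2 := by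
    have := norm_prod_exp_sub_sq_mul_le_integral univ x xs (fun k => (lam k : ℂ)) ht₀.le (-b)
    rwa [card_univ, Fintype.card_fin, show -b + (K + 1) * t₀ = b by ring] at this
  have hP : (2 * t₀ / Real.pi) ^ K * ∏ k, |x - xs k| ≤ ‖P‖ := by
    have hdist : ∀ k ∈ univ, |x - xs k| * t₀ ≤ Real.pi := fun k _ => by
      have := Real.dist_le_of_mem_Icc hx (hxs k)
      rw [Real.dist_eq] at this
      nlinarith [abs_nonneg (x - xs k)]
    simpa only [card_univ, Fintype.card_fin] using
      pow_mul_prod_abs_le_norm_prod_exp_sub univ x xs ht₀.le hdist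
  have hweight : Ghat b * ∫ t in -b..b, ‖F t‖ ^ 2 ≤ ∫ t, ‖F t‖ ^ 2 * Ghat t :=
    mul_intervalIntegral_le_integral_mul (neg_le_self (by positivity)) (fun t => by positivity)
      (fun t => (hpos t).le) (Continuous.intervalIntegrable (by fun_prop) _ _)
      (integrable_norm_exp_sub_sum_sq_mul _ _ _ _ hint)
      fun t ht => le_of_abs_le_of_even_of_antitoneOn heven hmono (abs_le.2 ht)
  calc Ghat b * (t₀ ^ (2 * K + 1) / Real.pi ^ (2 * K)) * ∏ k, |x - xs k| ^ 2
      = Ghat b / 4 ^ K * ((2 * t₀ / Real.pi) ^ K * ∏ k, |x - xs k|) ^ 2 * t₀ := by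
        rw [prod_pow, mul_pow, ← pow_mul, div_pow, mul_pow,
          show (4 : ℝ) ^ K = 2 ^ (K * 2) by rw [pow_mul']; norm_num]
        field_simp
        ring
    _ ≤ Ghat b / 4 ^ K * ‖P‖ ^ 2 * t₀ := by
        have := hpos b
        gcongr
    _ ≤ Ghat b / 4 ^ K * (4 ^ K * ∫ t in -b..b, ‖F t‖ ^ 2) := by
        have := hpos b
        rw [mul_assoc]
        gcongr
    _ = Ghat b * ∫ t in -b..b, ‖F t‖ ^ 2 := by field_simp
    _ ≤ _ := hweight

/-- lower bound on the conditional variance: if `Ĝ` is in addition nonincreasing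
on `[0,∞)`, then for `x, x₁, …, x_K ∈ [-1,1]` (the `x_k` pairwise distinct) and `0 < t₀ < π/2`,
`inf_λ ∫ |e^{ixt} - Σ λ_k e^{ix_k t}|² Ĝ(t) dt ≥ Ĝ((K+1)t₀/2) (t₀^{2K+1}/π^{2K}) ∏|x-x_k|²`. -/
theorem condVar_lower_bound
    (Ghat : ℝ → ℝ) (hcont : Continuous Ghat) (heven : ∀ t, Ghat (-t) = Ghat t)
    (hpos : ∀ t, 0 < Ghat t) (hint : Integrable Ghat)
    (hmono : ∀ s t : ℝ, 0 ≤ s → s ≤ t → Ghat t ≤ Ghat s)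
    (x : ℝ) (hx : x ∈ Set.Icc (-1 : ℝ) 1)
    (K : ℕ) (xs : Fin K → ℝ) (hxs : ∀ k, xs k ∈ Set.Icc (-1 : ℝ) 1)
    (hinj : Function.Injective xs)
    (t₀ : ℝ) (ht₀ : 0 < t₀) (ht₀' : t₀ < Real.pi / 2) :
    Ghat ((K + 1) * t₀ / 2) * (t₀ ^ (2 * K + 1) / Real.pi ^ (2 * K)) * ∏ k, |x - xs k| ^ 2
      ≤ ⨅ lam : Fin K → ℝ, ∫ t : ℝ,
          ‖Complex.exp (Complex.I * (x : ℂ) * (t : ℂ))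
            - ∑ k, (lam k : ℂ) * Complex.exp (Complex.I * (xs k : ℂ) * (t : ℂ))‖ ^ 2
          * Ghat t :=
  condVar_lower_bound_general Ghat heven hpos hint hmono x hx K xs hxs t₀ ht₀ ht₀'
end

section
/- For every h ≥ 0: (1/2) e^{−h²} ≤ ∫₀^∞ e^{−(w+h)²/2} w dw ≤ e^{−h²/2}. -/
/-! For `w, h ≥ 0` the exponent is sandwiched, `(w² + h²) / 2 ≤ (w + h)² / 2 ≤ w² + h²`, so the
integrand lies between `e^{-h²} · w e^{-w²}` and `e^{-h²/2} · w e^{-w²/2}`, and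
`∫₀^∞ w e^{-b w²} dw = 1 / (2b)`. -/

open Real MeasureTheory Set

theorem integral_Ioi_mul_exp_neg_mul_sq {b : ℝ} (hb : 0 < b) :
    ∫ r in Ioi (0 : ℝ), r * exp (-b * r ^ 2) = (2 * b)⁻¹ := by
  have h := integral_mul_cexp_neg_mul_sq (b := (b : ℂ)) (by simpa)
  apply Complex.ofReal_injective
  rw [← integral_complex_ofReal]
  push_cast
  exact h

theorem exp_neg_sq_mul_exp_neg_sq_le (w h : ℝ) :
    exp (-h ^ 2) * exp (-1 * w ^ 2) ≤ exp (-(w + h) ^ 2 / 2) := by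
  rw [← exp_add, exp_le_exp]
  nlinarith [sq_nonneg (w - h)]

theorem exp_neg_add_sq_div_two_le {w h : ℝ} (hw : 0 ≤ w) (hh : 0 ≤ h) :
    exp (-(w + h) ^ 2 / 2) ≤ exp (-h ^ 2 / 2) * exp (-(1 / 2) * w ^ 2) := by
  rw [← exp_add, exp_le_exp]
  nlinarith [mul_nonneg hw hh]

/-- for every `h ≥ 0`,
`(1/2) e^{-h²} ≤ ∫₀^∞ e^{-(w+h)²/2} w dw ≤ e^{-h²/2}`. -/
theorem gaussian_tail_integral_bounds (h : ℝ) (hh : 0 ≤ h) :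
    (1 / 2) * Real.exp (-h ^ 2)
        ≤ ∫ w in Set.Ioi (0 : ℝ), Real.exp (-(w + h) ^ 2 / 2) * w
      ∧ ∫ w in Set.Ioi (0 : ℝ), Real.exp (-(w + h) ^ 2 / 2) * w
        ≤ Real.exp (-h ^ 2 / 2) := by
  have lower : ∀ w ∈ Ioi (0 : ℝ),
      exp (-h ^ 2) * (w * exp (-1 * w ^ 2)) ≤ exp (-(w + h) ^ 2 / 2) * w := fun w hw => by
    rw [mul_left_comm, mul_comm]
    exact mul_le_mul_of_nonneg_right (exp_neg_sq_mul_exp_neg_sq_le w h) hw.le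
  have upper : ∀ w ∈ Ioi (0 : ℝ),
      exp (-(w + h) ^ 2 / 2) * w ≤ exp (-h ^ 2 / 2) * (w * exp (-(1 / 2) * w ^ 2)) :=
    fun w hw => by
      rw [mul_left_comm, mul_comm w]
      exact mul_le_mul_of_nonneg_right (exp_neg_add_sq_div_two_le hw.le hh) hw.le
  have int_lower := ((integrable_mul_exp_neg_mul_sq one_pos).integrableOn
    (s := Ioi 0)).const_mul (exp (-h ^ 2))
  have int_upper := ((integrable_mul_exp_neg_mul_sq one_half_pos).integrableOn
    (s := Ioi 0)).const_mul (exp (-h ^ 2 / 2))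
  have int_middle : IntegrableOn (fun w => exp (-(w + h) ^ 2 / 2) * w) (Ioi 0) :=
    integrable_of_le_of_le (by fun_prop)
      ((ae_restrict_iff' measurableSet_Ioi).2 (.of_forall lower))
      ((ae_restrict_iff' measurableSet_Ioi).2 (.of_forall upper)) int_lower int_upper
  constructor
  · calc 1 / 2 * exp (-h ^ 2) = ∫ w in Ioi 0, exp (-h ^ 2) * (w * exp (-1 * w ^ 2)) := by
          rw [integral_const_mul, integral_Ioi_mul_exp_neg_mul_sq one_pos]; ring
      _ ≤ _ := setIntegral_mono_on int_lower int_middle measurableSet_Ioi lower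
  · calc _ ≤ ∫ w in Ioi 0, exp (-h ^ 2 / 2) * (w * exp (-(1 / 2) * w ^ 2)) :=
          setIntegral_mono_on int_middle int_upper measurableSet_Ioi upper
      _ = exp (-h ^ 2 / 2) := by
          rw [integral_const_mul, integral_Ioi_mul_exp_neg_mul_sq one_half_pos]; norm_num
end
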